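/- arXiv:2305.10038 — 5 statements merged into one kernel-verified Lean document; each statement's English description precedes it below -/
import Mathlib

section
/- Let a ∈ (0, 2/3] and p ∈ (0,1), and let f ∈ U_+. Then for any x, y ∈ [0, 1/(1−a)] with f(x) = f(y), almost surely τ_x = τ_y and f(X_{n∧τ_x}^x) = f(X_{n∧τ_y}^y) for every n ≥ 1 (both chains being driven by the same innovation sequence (ξ_n)). -/
open MeasureTheory Filter Set ProbabilityTheory
open scoped ENNReal Classical Topology

noncomputable section

/-- The map `T_a` (extended to a total function; on the paper's domain it agrees with `T_a`,
and `T_{2/3}(1) = 0`). -/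
def Tmap (a x : ℝ) : ℝ := if x < 1 then (x + 1) / a else (x - 1) / a

/-- `κ_a(x) ∈ ℕ∞`: the first entry time of the orbit of `x` under `T_a` into the hole
`I_a = ((2a-1)/(1-a), 1)`. -/
def kappa (a x : ℝ) : ℕ∞ :=
  ⨅ (k : ℕ) (_ : (Tmap a)^[k] x ∈ Set.Ioo ((2 * a - 1) / (1 - a)) 1), (k : ℕ∞)

/-- `δ_k(x)` -/
def deltaF (a x : ℝ) (k : ℕ) : ℝ := if (Tmap a)^[k] x < 1 then 1 else 0

/-- `L_k(x)` -/
def Lnat (a x : ℝ) (k : ℕ) : ℕ :=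
  ((Finset.range k).filter fun i => (Tmap a)^[i] x < 1).card

/-- the `k`-th term of the series `∑_{k=0}^{κ_a(x)} δ_k(x) (p/λ)^{k+1} (q/p)^{L_k(x)}` -/
def lamTerm (a p x lam : ℝ) (k : ℕ) : ℝ :=
  if (k : ℕ∞) ≤ kappa a x then
    deltaF a x k * (p / lam) ^ (k + 1) * ((1 - p) / p) ^ (Lnat a x k)
  else 0

/-- `λ` is a positive solution of the equation defining `λ_a`. -/
def IsLamSol (a p lam : ℝ) : Prop := 0 < lam ∧ HasSum (lamTerm a p 0 lam) 1

/-- `V(x) = ∑_{k=0}^{κ_a} (p/λ_a)^k (q/p)^{L_k} 1{T_a^k(0) ≤ x}` -/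
def Vfun (a p lam x : ℝ) : ℝ :=
  ∑' k : ℕ, if (k : ℕ∞) ≤ kappa a 0 ∧ (Tmap a)^[k] 0 ≤ x then
    (p / lam) ^ k * ((1 - p) / p) ^ (Lnat a 0 k) else 0

/-- `F̄_a(y) = ∑_{k=0}^{κ_a(y)} δ_k(y) (p/λ_a)^{k+1} (q/p)^{L_k(y)}`. -/
def Fbar (a p lam y : ℝ) : ℝ := ∑' k, lamTerm a p y lam k

/-- Membership in the class `U_+` of positive saltus functions supported on the orbit of `0`. -/
def UplusMem (a : ℝ) (f : ℝ → ℝ) : Prop :=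
  ∃ u : ℕ → ℝ, (∀ k : ℕ, (k : ℕ∞) ≤ kappa a 0 → 0 < u k) ∧
    Summable (fun k : ℕ => if (k : ℕ∞) ≤ kappa a 0 then u k else 0) ∧
    ∀ x : ℝ, f x = ∑' k : ℕ, if (k : ℕ∞) ≤ kappa a 0 ∧ (Tmap a)^[k] 0 ≤ x then u k else 0

/-!
The coupling is pathwise. Since every jump of `f ∈ U_+` is positive, the level sets of `f` are
the cells cut out by the orbit points `t_k = T_a^k(0)`, `k ≤ κ_a`. If `z, w ∈ [0, 1/(1-a)]` lie in
one cell and `e = ±1`, then for each `k` the comparison `t_k ≤ a z + e` is either decided on the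
whole interval or equivalent to `t_{k+1} ≤ z`, as `t_{k+1} = (t_k - e)/a`; so `a z + e` and
`a w + e` lie in one cell again. For `a = 2/3` this needs that the orbit of `0` avoids `1`.
As `t_0 = 0`, points of one cell are negative together, so both chains exit at the same time.
-/

section Orbit

variable {a x : ℝ} {k : ℕ}

lemma natCast_le_kappa_iff :
    (k : ℕ∞) ≤ kappa a x ↔ ∀ j < k, (Tmap a)^[j] x ∉ Ioo ((2 * a - 1) / (1 - a)) 1 := by
  refine ⟨fun h j hj hmem => ?_, fun h => le_iInf₂ fun j hmem => ?_⟩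
  · have : (k : ℕ∞) ≤ j := h.trans (iInf₂_le j hmem)
    exact absurd hj (not_lt.2 (by exact_mod_cast this))
  · exact_mod_cast not_lt.1 fun hjk => h j (by exact_mod_cast hjk) hmem

lemma natCast_succ_le_kappa (hk : (k : ℕ∞) ≤ kappa a x)
    (hmem : (Tmap a)^[k] x ∉ Ioo ((2 * a - 1) / (1 - a)) 1) :
    ((k + 1 : ℕ) : ℕ∞) ≤ kappa a x :=
  natCast_le_kappa_iff.2 fun j hj =>
    (Nat.lt_succ_iff_lt_or_eq.1 hj).elim (natCast_le_kappa_iff.1 hk j) (· ▸ hmem)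

namespace Tmap

lemma exists_iterate_two_thirds_mul_pow_eq (k : ℕ) :
    ∃ c : ℤ, (Tmap (2 / 3))^[k] 0 * 2 ^ k = 3 * c := by
  induction k with
  | zero => exact ⟨0, by simp⟩
  | succ k ih =>
    obtain ⟨c, hc⟩ := ih
    rw [Function.iterate_succ_apply', Tmap, pow_succ]
    split_ifs
    · exact ⟨3 * c + 2 ^ k, by push_cast; linear_combination 3 * hc⟩
    · exact ⟨3 * c - 2 ^ k, by push_cast; linear_combination 3 * hc⟩

lemma iterate_two_thirds_ne_one (k : ℕ) : (Tmap (2 / 3))^[k] 0 ≠ 1 := by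
  intro h
  obtain ⟨c, hc⟩ := exists_iterate_two_thirds_mul_pow_eq k
  rw [h, one_mul] at hc
  have h3 : (3 : ℤ) ∣ 2 ^ k := ⟨c, by exact_mod_cast hc⟩
  exact absurd (Int.Prime.dvd_pow' (by norm_num) h3) (by norm_num)

lemma iterate_lt_one_of_le (ha : a ∈ Ioc 0 (2 / 3))
    (h : (Tmap a)^[k] 0 ≤ (2 * a - 1) / (1 - a)) : (Tmap a)^[k] 0 < 1 := by
  obtain ⟨ha0, ha23⟩ := ha
  rcases ha23.eq_or_lt with rfl | hlt
  · exact (h.trans_eq (by norm_num)).lt_of_ne (iterate_two_thirds_ne_one k)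
  · exact h.trans_lt ((div_lt_one (by linarith)).2 (by linarith))

end Tmap

end Orbit

/-- `z` and `w` lie in the same cell of the partition of `ℝ` cut out by the orbit points
`T_a^k(0)`, `k ≤ κ_a`; these cells are exactly the level sets of any `f ∈ U_+`. -/
def SameCell (a z w : ℝ) : Prop :=
  ∀ k : ℕ, (k : ℕ∞) ≤ kappa a 0 → ((Tmap a)^[k] 0 ≤ z ↔ (Tmap a)^[k] 0 ≤ w)

namespace SameCell

variable {a z w : ℝ} {k : ℕ}

lemma symm (h : SameCell a z w) : SameCell a w z := fun k hk => (h k hk).symm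

lemma nonneg_iff (h : SameCell a z w) : 0 ≤ z ↔ 0 ≤ w := h 0 zero_le

lemma iterate_le_mul_add_one_iff (ha : 0 < a) (hz : 0 ≤ z) (hw : 0 ≤ w) (h : SameCell a z w)
    (hk : (k : ℕ∞) ≤ kappa a 0) :
    (Tmap a)^[k] 0 ≤ a * z + 1 ↔ (Tmap a)^[k] 0 ≤ a * w + 1 := by
  set t := (Tmap a)^[k] 0
  by_cases ht : t < 1
  · exact iff_of_true (by nlinarith) (by nlinarith)
  have hT : (Tmap a)^[k + 1] 0 = (t - 1) / a := by
    rw [Function.iterate_succ_apply', Tmap, if_neg ht]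
  have hshift (v : ℝ) : t ≤ a * v + 1 ↔ (t - 1) / a ≤ v := by
    rw [div_le_iff₀ ha]; constructor <;> intro <;> linarith
  rw [hshift, hshift, ← hT]
  exact h _ (natCast_succ_le_kappa hk fun hmem => ht hmem.2)

lemma iterate_le_mul_sub_one_iff (ha : a ∈ Ioc 0 (2 / 3)) (hz : z ≤ 1 / (1 - a))
    (hw : w ≤ 1 / (1 - a)) (h : SameCell a z w) (hk : (k : ℕ∞) ≤ kappa a 0) :
    (Tmap a)^[k] 0 ≤ a * z - 1 ↔ (Tmap a)^[k] 0 ≤ a * w - 1 := by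
  set t := (Tmap a)^[k] 0
  by_cases ht : t ≤ (2 * a - 1) / (1 - a)
  · have hT : (Tmap a)^[k + 1] 0 = (t + 1) / a := by
      rw [Function.iterate_succ_apply', Tmap, if_pos (Tmap.iterate_lt_one_of_le ha ht)]
    have hshift (v : ℝ) : t ≤ a * v - 1 ↔ (t + 1) / a ≤ v := by
      rw [div_le_iff₀ ha.1]; constructor <;> intro <;> linarith
    rw [hshift, hshift, ← hT]
    exact h _ (natCast_succ_le_kappa hk fun hmem => (not_lt.2 ht) hmem.1)
  have hbound {v : ℝ} (hv : v ≤ 1 / (1 - a)) : a * v - 1 ≤ (2 * a - 1) / (1 - a) := by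
    have h1a : 0 < 1 - a := by linarith [ha.2]
    calc a * v - 1 ≤ a * (1 / (1 - a)) - 1 := by gcongr; exact ha.1.le
      _ = (2 * a - 1) / (1 - a) := by field_simp; ring
  exact iff_of_false (fun h' => ht (h'.trans (hbound hz))) (fun h' => ht (h'.trans (hbound hw)))

lemma step (ha : a ∈ Ioc 0 (2 / 3)) {e : ℝ} (he : e = 1 ∨ e = -1)
    (hz : z ∈ Icc 0 (1 / (1 - a))) (hw : w ∈ Icc 0 (1 / (1 - a))) (h : SameCell a z w) :
    SameCell a (a * z + e) (a * w + e) := by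
  intro k hk
  rcases he with rfl | rfl
  · exact h.iterate_le_mul_add_one_iff ha.1 hz.1 hw.1 hk
  · simpa only [← sub_eq_add_neg] using h.iterate_le_mul_sub_one_iff ha hz.2 hw.2 hk

end SameCell

namespace UplusMem

variable {a z w : ℝ} {f : ℝ → ℝ}

lemma eq_of_sameCell (hf : UplusMem a f) (h : SameCell a z w) : f z = f w := by
  obtain ⟨u, -, -, hfu⟩ := hf
  rw [hfu, hfu]
  refine tsum_congr fun k => ?_
  by_cases hk : (k : ℕ∞) ≤ kappa a 0
  · simp only [hk, h k hk, true_and]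
  · simp only [hk, false_and, if_false]

lemma lt_of_lt_iterate_le (hf : UplusMem a f) {k : ℕ} (hk : (k : ℕ∞) ≤ kappa a 0)
    (hz : z < (Tmap a)^[k] 0) (hw : (Tmap a)^[k] 0 ≤ w) : f z < f w := by
  obtain ⟨u, hpos, hsum, hfu⟩ := hf
  have hnonneg (v : ℝ) (j : ℕ) :
      0 ≤ if (j : ℕ∞) ≤ kappa a 0 ∧ (Tmap a)^[j] 0 ≤ v then u j else 0 := by
    split_ifs with hj
    exacts [(hpos j hj.1).le, le_rfl]
  rw [hfu, hfu]
  refine Summable.tsum_lt_tsum_of_nonneg (i := k) (hnonneg z) (fun j => ?_) ?_ ?_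
  · have hzw : z ≤ w := hz.le.trans hw
    split_ifs with hjz hjw hjw
    exacts [le_rfl, absurd ⟨hjz.1, hjz.2.trans hzw⟩ hjw, (hpos j hjw.1).le, le_rfl]
  · simp only [hk, hw, not_le.2 hz, and_false, and_true, if_true, if_false, hpos k hk]
  · refine hsum.of_nonneg_of_le (hnonneg w) (fun j => ?_)
    split_ifs with hj hj' hj'
    exacts [le_rfl, absurd hj.1 hj', (hpos j hj').le, le_rfl]

lemma sameCell_of_eq (hf : UplusMem a f) (h : f z = f w) : SameCell a z w := by
  intro k hk
  constructor
  · exact fun hz => not_lt.1 fun hw => (hf.lt_of_lt_iterate_le hk hw hz).ne' h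
  · exact fun hw => not_lt.1 fun hz => (hf.lt_of_lt_iterate_le hk hz hw).ne h

end UplusMem

lemma ae_eq_one_or_eq_neg_one {Ω : Type*} [MeasurableSpace Ω] {μ : Measure Ω}
    [IsProbabilityMeasure μ] {ζ : Ω → ℝ} (hζ : Measurable ζ) {p : ℝ}
    (h1 : μ {ω | ζ ω = 1} = ENNReal.ofReal p) (h2 : μ {ω | ζ ω = -1} = ENNReal.ofReal (1 - p)) :
    ∀ᵐ ω ∂μ, ζ ω = 1 ∨ ζ ω = -1 := by
  have hmeas (c : ℝ) : MeasurableSet {ω | ζ ω = c} := hζ (measurableSet_singleton c)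
  have hdisj : Disjoint {ω | ζ ω = 1} {ω | ζ ω = -1} :=
    disjoint_left.2 fun ω h1 h2 => by norm_num [show ζ ω = 1 from h1] at h2
  have hunion : MeasurableSet {ω | ζ ω = 1 ∨ ζ ω = -1} := (hmeas 1).union (hmeas (-1))
  rw [ae_iff_measure_eq hunion.nullMeasurableSet, ofPred_or, measure_univ]
  refine le_antisymm prob_le_one ?_
  calc (1 : ℝ≥0∞) = ENNReal.ofReal (p + (1 - p)) := by simp
    _ ≤ ENNReal.ofReal p + ENNReal.ofReal (1 - p) := ENNReal.ofReal_add_le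
    _ = _ := by rw [measure_union hdisj (hmeas (-1)), h1, h2]

section ExitTime

variable {P Q : ℕ → Prop}

lemma iInf_natCast_le_of_forall_first (h : ∀ n, (∀ m < n, ¬ P m) → P n → Q n) :
    (⨅ (n : ℕ) (_ : Q n), (n : ℕ∞)) ≤ ⨅ (n : ℕ) (_ : P n), (n : ℕ∞) := by
  refine le_iInf₂ fun n hn => ?_
  induction n using Nat.strong_induction_on with
  | _ n ih =>
    by_cases hfirst : ∀ m < n, ¬ P m
    · exact iInf₂_le n (h n hfirst hn)
    · push Not at hfirst
      obtain ⟨m, hm, hPm⟩ := hfirst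
      exact (ih m hm hPm).trans (by exact_mod_cast hm.le)

lemma not_of_lt_toNat_min_iInf {n j : ℕ}
    (hj : j < (min (n : ℕ∞) (⨅ (m : ℕ) (_ : P m), (m : ℕ∞))).toNat) : ¬ P j := by
  intro hPj
  have : (min (n : ℕ∞) (⨅ (m : ℕ) (_ : P m), (m : ℕ∞))).toNat ≤ j :=
    ENat.toNat_le_of_le_natCast ((min_le_right _ _).trans (iInf₂_le j hPj))
  omega

end ExitTime

section Coupling

variable {a : ℝ} {z w e : ℕ → ℝ}

lemma le_one_div_one_sub_of_forall_le_one (ha0 : 0 ≤ a) (ha1 : a < 1) (he : ∀ n, e n ≤ 1)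
    (hz : ∀ n, z (n + 1) = a * z n + e (n + 1)) (hz0 : z 0 ≤ 1 / (1 - a)) :
    ∀ n, z n ≤ 1 / (1 - a)
  | 0 => hz0
  | n + 1 => by
    have h1a : 1 - a ≠ 0 := by linarith
    calc z (n + 1) = a * z n + e (n + 1) := hz n
      _ ≤ a * (1 / (1 - a)) + 1 :=
        add_le_add (mul_le_mul_of_nonneg_left
          (le_one_div_one_sub_of_forall_le_one ha0 ha1 he hz hz0 n) ha0) (he _)
      _ = 1 / (1 - a) := by field_simp; ring

lemma sameCell_of_forall_lt_nonneg (ha : a ∈ Ioc 0 (2 / 3)) (he : ∀ n, e n = 1 ∨ e n = -1)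
    (hz : ∀ n, z (n + 1) = a * z n + e (n + 1)) (hw : ∀ n, w (n + 1) = a * w n + e (n + 1))
    (hz0 : z 0 ∈ Icc 0 (1 / (1 - a))) (hw0 : w 0 ∈ Icc 0 (1 / (1 - a)))
    (h0 : SameCell a (z 0) (w 0)) :
    ∀ n, (∀ m < n, 0 ≤ z m) → SameCell a (z n) (w n) := by
  have he1 (n : ℕ) : e n ≤ 1 := by rcases he n with h | h <;> norm_num [h]
  have ha1 : a < 1 := by linarith [ha.2]
  have hzM := le_one_div_one_sub_of_forall_le_one ha.1.le ha1 he1 hz hz0.2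
  have hwM := le_one_div_one_sub_of_forall_le_one ha.1.le ha1 he1 hw hw0.2
  intro n
  induction n with
  | zero => exact fun _ => h0
  | succ n ih =>
    intro hpos
    have hn := ih fun m hm => hpos m (Nat.lt_succ_of_lt hm)
    have hzn : 0 ≤ z n := hpos n (Nat.lt_succ_self n)
    rw [hz, hw]
    exact hn.step ha (he _) ⟨hzn, hzM n⟩ ⟨hn.nonneg_iff.1 hzn, hwM n⟩

lemma iInf_neg_eq_of_sameCell (hzw : ∀ n, (∀ m < n, 0 ≤ z m) → SameCell a (z n) (w n))
    (hwz : ∀ n, (∀ m < n, 0 ≤ w m) → SameCell a (w n) (z n)) :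
    (⨅ (n : ℕ) (_ : z n < 0), (n : ℕ∞)) = ⨅ (n : ℕ) (_ : w n < 0), (n : ℕ∞) := by
  have hneg {v v' : ℕ → ℝ} (h : ∀ n, (∀ m < n, 0 ≤ v m) → SameCell a (v n) (v' n)) (n : ℕ)
      (hn : ∀ m < n, ¬ v m < 0) : v n < 0 → v' n < 0 := by
    simpa only [not_le] using (h n fun m hm => not_lt.1 (hn m hm)).nonneg_iff.not.1
  exact le_antisymm (iInf_natCast_le_of_forall_first (hneg hwz))
    (iInf_natCast_le_of_forall_first (hneg hzw))

end Coupling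

theorem coupling_of_lumped_values_general
    {Ω : Type*} [MeasurableSpace Ω] (μ : Measure Ω) [IsProbabilityMeasure μ]
    (a p : ℝ) (ha : a ∈ Set.Ioc (0 : ℝ) (2/3))
    (ξ : ℕ → Ω → ℝ) (hmeas : ∀ n, Measurable (ξ n))
    (hdist1 : ∀ n, μ {ω | ξ n ω = 1} = ENNReal.ofReal p)
    (hdist2 : ∀ n, μ {ω | ξ n ω = -1} = ENNReal.ofReal (1 - p))
    (X : ℝ → ℕ → Ω → ℝ)
    (hX0 : ∀ x ω, X x 0 ω = x)
    (hXrec : ∀ x n ω, X x (n + 1) ω = a * X x n ω + ξ (n + 1) ω)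
    (f : ℝ → ℝ) (hf : UplusMem a f)
    (x y : ℝ) (hx : x ∈ Set.Icc (0 : ℝ) (1 / (1 - a))) (hy : y ∈ Set.Icc (0 : ℝ) (1 / (1 - a)))
    (hfxy : f x = f y) :
    ∀ᵐ ω ∂μ,
      (⨅ (n : ℕ) (_ : X x n ω < 0), (n : ℕ∞)) = (⨅ (n : ℕ) (_ : X y n ω < 0), (n : ℕ∞)) ∧
      ∀ n : ℕ, 1 ≤ n →
        f (X x (min (n : ℕ∞) (⨅ (m : ℕ) (_ : X x m ω < 0), (m : ℕ∞))).toNat ω)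
          = f (X y (min (n : ℕ∞) (⨅ (m : ℕ) (_ : X y m ω < 0), (m : ℕ∞))).toNat ω) := by
  have hcell : SameCell a x y := hf.sameCell_of_eq hfxy
  have hξ : ∀ᵐ ω ∂μ, ∀ n, ξ n ω = 1 ∨ ξ n ω = -1 :=
    ae_all_iff.2 fun n => ae_eq_one_or_eq_neg_one (hmeas n) (hdist1 n) (hdist2 n)
  filter_upwards [hξ] with ω hω
  have hx0 : X x 0 ω ∈ Icc 0 (1 / (1 - a)) := by rwa [hX0]
  have hy0 : X y 0 ω ∈ Icc 0 (1 / (1 - a)) := by rwa [hX0]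
  have hxy := sameCell_of_forall_lt_nonneg (z := (X x · ω)) (w := (X y · ω)) ha hω
    (hXrec x · ω) (hXrec y · ω) hx0 hy0 (by simpa only [hX0] using hcell)
  have hyx := sameCell_of_forall_lt_nonneg (z := (X y · ω)) (w := (X x · ω)) ha hω
    (hXrec y · ω) (hXrec x · ω) hy0 hx0 (by simpa only [hX0] using hcell.symm)
  have hτ := iInf_neg_eq_of_sameCell hxy hyx
  refine ⟨hτ, fun n _ => ?_⟩
  rw [← hτ]
  exact hf.eq_of_sameCell (hxy _ fun j hj => not_lt.1 (not_of_lt_toNat_min_iInf hj))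

theorem coupling_of_lumped_values
    {Ω : Type*} [MeasurableSpace Ω] (μ : Measure Ω) [IsProbabilityMeasure μ]
    (a p : ℝ) (ha : a ∈ Set.Ioc (0 : ℝ) (2/3)) (hp : p ∈ Set.Ioo (0 : ℝ) 1)
    (ξ : ℕ → Ω → ℝ) (hmeas : ∀ n, Measurable (ξ n))
    (hindep : iIndepFun ξ μ)
    (hdist1 : ∀ n, μ {ω | ξ n ω = 1} = ENNReal.ofReal p)
    (hdist2 : ∀ n, μ {ω | ξ n ω = -1} = ENNReal.ofReal (1 - p))
    (X : ℝ → ℕ → Ω → ℝ)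
    (hX0 : ∀ x ω, X x 0 ω = x)
    (hXrec : ∀ x n ω, X x (n + 1) ω = a * X x n ω + ξ (n + 1) ω)
    (f : ℝ → ℝ) (hf : UplusMem a f)
    (x y : ℝ) (hx : x ∈ Set.Icc (0 : ℝ) (1 / (1 - a))) (hy : y ∈ Set.Icc (0 : ℝ) (1 / (1 - a)))
    (hfxy : f x = f y) :
    ∀ᵐ ω ∂μ,
      (⨅ (n : ℕ) (_ : X x n ω < 0), (n : ℕ∞)) = (⨅ (n : ℕ) (_ : X y n ω < 0), (n : ℕ∞)) ∧
      ∀ n : ℕ, 1 ≤ n →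
        f (X x (min (n : ℕ∞) (⨅ (m : ℕ) (_ : X x m ω < 0), (m : ℕ∞))).toNat ω)
          = f (X y (min (n : ℕ∞) (⨅ (m : ℕ) (_ : X y m ω < 0), (m : ℕ∞))).toNat ω) :=
  coupling_of_lumped_values_general μ a p ha ξ hmeas hdist1 hdist2 X hX0 hXrec f hf x y hx hy hfxy

end
end

section
/- Let a ∈ (0, 2/3], p ∈ (0,1), f ∈ U_+, and x ∈ [0, 1/(1−a)]. Set Y_n = f(X_n^x)·1{τ_x > n}. Then almost surely τ_x = inf{n ≥ 1 : Y_n = 0}, and (Y_n)_{n≥0} is a time-homogeneous Markov chain: for every bounded measurable g : ℝ → ℝ there exists a measurable h : ℝ → ℝ such that for every n ≥ 0, E[g(Y_{n+1}) | σ(ξ_1, …, ξ_n)] = h(Y_n) almost surely. -/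
/-!
All jumps of `f ∈ U_+` are positive, so `f z` determines which jump points `T_a^k(0)`,
`k ≤ κ_a`, lie below `z`. For `z ∈ [0, 1/(1-a)]` this determines the jump points below `a z ± 1`:
a jump point `w < 1` lies below `a z + 1`, and `w ≥ 1` does iff `T_a w = (w - 1)/a` lies below `z`;
a jump point `w ≤ (2a-1)/(1-a)` lies below `a z - 1` iff `T_a w = (w + 1)/a` lies below `z`, and
the others lie above `a z - 1 ≤ (2a-1)/(1-a) ≤ 1` (for `a = 2/3` the orbit of `0` never hits `1`).
Hence `f (a z ± 1)` is a monotone, so measurable, function `Ψ_{±1}` of `f z`, and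
`Y_{n+1} = Ψ_{ξ_{n+1}}(Y_n)`. Since `ξ_{n+1}` is independent of `σ(ξ_1, …, ξ_n)`, conditioning
gives `p g(Ψ_1(Y_n)) + q g(Ψ_{-1}(Y_n))`.
-/

open MeasureTheory Filter Set ProbabilityTheory
open scoped ENNReal Classical Topology

noncomputable section

section Saltus

variable {ι : Type*}

def saltus (K : Set ι) (x u : ι → ℝ) (z : ℝ) : ℝ := ∑' k, {k ∈ K | x k ≤ z}.indicator u k

variable {K : Set ι} {x u : ι → ℝ}

lemma indicator_sep_nonneg (hu : ∀ k ∈ K, 0 < u k) (z : ℝ) :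
    0 ≤ {k ∈ K | x k ≤ z}.indicator u :=
  Set.indicator_nonneg fun k hk => (hu k hk.1).le

lemma summable_indicator_sep (hs : Summable (K.indicator u)) (z : ℝ) :
    Summable ({k ∈ K | x k ≤ z}.indicator u) := by
  have hsep : {k ∈ K | x k ≤ z} = {k | x k ≤ z} ∩ K := Set.inter_comm _ _
  rw [hsep, ← Set.indicator_indicator]
  exact hs.indicator _

lemma indicator_sep_mono (hu : ∀ k ∈ K, 0 < u k) {z z' : ℝ} (hzz' : z ≤ z') :
    {k ∈ K | x k ≤ z}.indicator u ≤ {k ∈ K | x k ≤ z'}.indicator u := by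
  intro k
  by_cases hk : k ∈ K ∧ x k ≤ z
  · rw [Set.indicator_of_mem (show k ∈ {k ∈ K | x k ≤ z} from hk),
      Set.indicator_of_mem (show k ∈ {k ∈ K | x k ≤ z'} from ⟨hk.1, hk.2.trans hzz'⟩)]
  · rw [Set.indicator_of_notMem (show k ∉ {k ∈ K | x k ≤ z} from hk)]
    exact indicator_sep_nonneg hu z' k

lemma saltus_mono (hu : ∀ k ∈ K, 0 < u k) (hs : Summable (K.indicator u)) :
    Monotone (saltus K x u) := fun _ _ hzz' =>
  Summable.tsum_le_tsum (indicator_sep_mono hu hzz') (summable_indicator_sep hs _)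
    (summable_indicator_sep hs _)

lemma saltus_lt_saltus (hu : ∀ k ∈ K, 0 < u k) (hs : Summable (K.indicator u)) {k : ι}
    (hk : k ∈ K) {z z' : ℝ} (hz : z < x k) (hz' : x k ≤ z') :
    saltus K x u z < saltus K x u z' := by
  refine Summable.tsum_lt_tsum (i := k) (indicator_sep_mono hu (hz.le.trans hz')) ?_
    (summable_indicator_sep hs _) (summable_indicator_sep hs _)
  rw [Set.indicator_of_notMem (show k ∉ {k ∈ K | x k ≤ z} from fun h => h.2.not_gt hz),
    Set.indicator_of_mem (show k ∈ {k ∈ K | x k ≤ z'} from ⟨hk, hz'⟩)]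
  exact hu k hk

lemma saltus_pos (hu : ∀ k ∈ K, 0 < u k) (hs : Summable (K.indicator u)) {k : ι} (hk : k ∈ K)
    {z : ℝ} (hz : x k ≤ z) : 0 < saltus K x u z := by
  refine Summable.tsum_pos (summable_indicator_sep hs z) (indicator_sep_nonneg hu z) k ?_
  rw [Set.indicator_of_mem (show k ∈ {k ∈ K | x k ≤ z} from ⟨hk, hz⟩)]
  exact hu k hk

lemma saltus_eq_zero {z : ℝ} (hz : ∀ k ∈ K, z < x k) : saltus K x u z = 0 := by
  have hempty : {k ∈ K | x k ≤ z} = ∅ :=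
    Set.eq_empty_of_forall_notMem fun k hk => (hz k hk.1).not_ge hk.2
  simp [saltus, hempty]

lemma saltus_eq_saltus_iff (hu : ∀ k ∈ K, 0 < u k) (hs : Summable (K.indicator u)) {z z' : ℝ} :
    saltus K x u z = saltus K x u z' ↔ ∀ k ∈ K, (x k ≤ z ↔ x k ≤ z') := by
  refine ⟨fun heq k hk => ⟨fun h => ?_, fun h => ?_⟩, fun hcut => ?_⟩
  · by_contra h'
    exact (saltus_lt_saltus hu hs hk (not_le.mp h') h).ne' heq
  · by_contra h'
    exact (saltus_lt_saltus hu hs hk (not_le.mp h') h).ne heq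
  · have hsets : {k ∈ K | x k ≤ z} = {k ∈ K | x k ≤ z'} :=
      Set.ext fun k => and_congr_right (hcut k)
    rw [saltus, saltus, hsets]

end Saltus

theorem exists_monotone_comp_eq_of_monotoneOn {α β γ : Type*} [LinearOrder α] [PartialOrder β]
    [ConditionallyCompleteLattice γ] {f : α → β} {F : α → γ} {l r : α}
    (hf : MonotoneOn f (Icc l r)) (hF : MonotoneOn F (Icc l r))
    (hfib : ∀ z ∈ Icc l r, ∀ z' ∈ Icc l r, f z = f z' → F z = F z') :
    ∃ Φ : β → γ, Monotone Φ ∧ ∀ z ∈ Icc l r, Φ (f z) = F z := by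
  have hbdd : ∀ y, BddAbove (insert (F l) (F '' {z ∈ Icc l r | f z ≤ y})) := by
    refine fun y => bddAbove_insert.2 ⟨F r, ?_⟩
    rintro _ ⟨z, ⟨hz, -⟩, rfl⟩
    exact hF hz ⟨hz.1.trans hz.2, le_rfl⟩ hz.2
  refine ⟨fun y => sSup (insert (F l) (F '' {z ∈ Icc l r | f z ≤ y})), ?_, fun z₀ hz₀ => ?_⟩
  · refine fun y y' hyy' => csSup_le_csSup (hbdd y') (insert_nonempty _ _) ?_
    exact insert_subset_insert (image_mono fun z hz => ⟨hz.1, hz.2.trans hyy'⟩)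
  · have hl : l ∈ Icc l r := ⟨le_rfl, hz₀.1.trans hz₀.2⟩
    refine IsGreatest.csSup_eq ⟨mem_insert_of_mem _ ⟨z₀, ⟨hz₀, le_rfl⟩, rfl⟩, ?_⟩
    rintro _ (rfl | ⟨z, ⟨hz, hfz⟩, rfl⟩)
    · exact hF hl hz₀ hz₀.1
    rcases le_total z z₀ with hle | hle
    · exact hF hz hz₀ hle
    · exact (hfib z hz z₀ hz₀ (le_antisymm hfz (hf hz₀ hz hle))).le

section Orbit

variable {a : ℝ}

lemma Tmap_nonneg (ha : 0 ≤ a) {y : ℝ} (hy : 0 ≤ y) : 0 ≤ Tmap a y := by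
  unfold Tmap
  split_ifs with h
  · positivity
  · exact div_nonneg (by linarith [not_lt.mp h]) ha

lemma Tmap_iterate_nonneg (ha : 0 ≤ a) (k : ℕ) : 0 ≤ (Tmap a)^[k] 0 := by
  induction k with
  | zero => exact le_rfl
  | succ k ih => rw [Function.iterate_succ_apply']; exact Tmap_nonneg ha ih

lemma Tmap_two_thirds_iterate_ne_one (k : ℕ) : (Tmap (2 / 3))^[k] 0 ≠ 1 := by
  -- `2^(k+1) T^(k+1)(0)` is a multiple of 3, while `2^(k+1)` is not
  have hdvd : ∀ k : ℕ, ∃ m : ℤ, (Tmap (2 / 3))^[k + 1] 0 * 2 ^ (k + 1) = 3 * m := by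
    intro k
    induction k with
    | zero => exact ⟨1, by norm_num [Tmap]⟩
    | succ k ih =>
      obtain ⟨m, hm⟩ := ih
      rw [Function.iterate_succ_apply', Tmap]
      split_ifs
      · exact ⟨3 * m + 2 ^ (k + 1), by push_cast; linear_combination 3 * hm⟩
      · exact ⟨3 * m - 2 ^ (k + 1), by push_cast; linear_combination 3 * hm⟩
  intro h
  cases k with
  | zero => norm_num at h
  | succ k =>
    obtain ⟨m, hm⟩ := hdvd k
    rw [h, one_mul] at hm
    have h3 : ((3 : ℕ) : ℤ) ∣ 2 ^ (k + 1) := ⟨m, by exact_mod_cast hm⟩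
    have := Int.Prime.dvd_pow' Nat.prime_three h3
    norm_num at this

/-- The indices of the jump points `T_a^k(0)` of the functions in `U_+`. -/
def orbitIndices (a : ℝ) : Set ℕ := {k | (k : ℕ∞) ≤ kappa a 0}

lemma mem_orbitIndices_iff {k : ℕ} :
    k ∈ orbitIndices a ↔
      ∀ j, (Tmap a)^[j] 0 ∈ Ioo ((2 * a - 1) / (1 - a)) 1 → k ≤ j := by
  simp only [orbitIndices, kappa, Set.mem_ofPred_eq, le_iInf_iff, Nat.cast_le]

lemma zero_mem_orbitIndices : 0 ∈ orbitIndices a := by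
  simp [orbitIndices]

lemma succ_mem_orbitIndices {k : ℕ} (hk : k ∈ orbitIndices a)
    (hhole : (Tmap a)^[k] 0 ∉ Ioo ((2 * a - 1) / (1 - a)) 1) : k + 1 ∈ orbitIndices a := by
  rw [mem_orbitIndices_iff] at hk ⊢
  exact fun j hj => (hk j hj).lt_of_ne (by rintro rfl; exact hhole hj)

lemma Tmap_iterate_lt_one_of_le (ha : a ∈ Ioc 0 (2 / 3)) {k : ℕ}
    (hk : (Tmap a)^[k] 0 ≤ (2 * a - 1) / (1 - a)) : (Tmap a)^[k] 0 < 1 := by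
  have h1a : 0 < 1 - a := by linarith [ha.2]
  have hb : (2 * a - 1) / (1 - a) ≤ 1 := by rw [div_le_one h1a]; linarith [ha.2]
  refine (hk.trans hb).lt_of_ne fun h1 => ?_
  rw [h1, le_div_iff₀ h1a] at hk
  obtain rfl : a = 2 / 3 := le_antisymm ha.2 (by linarith)
  exact Tmap_two_thirds_iterate_ne_one k h1

def SameOrbitCut (a z z' : ℝ) : Prop :=
  ∀ k ∈ orbitIndices a, ((Tmap a)^[k] 0 ≤ z ↔ (Tmap a)^[k] 0 ≤ z')

lemma SameOrbitCut.affine_add_one (ha : 0 < a) {z z' : ℝ} (hz : 0 ≤ z) (hz' : 0 ≤ z')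
    (h : SameOrbitCut a z z') : SameOrbitCut a (a * z + 1) (a * z' + 1) := by
  intro k hk
  by_cases hw : (Tmap a)^[k] 0 < 1
  · exact iff_of_true (by nlinarith) (by nlinarith)
  · have hk1 := succ_mem_orbitIndices hk fun hmem => hw hmem.2
    have hstep : ∀ t, (Tmap a)^[k] 0 ≤ a * t + 1 ↔ (Tmap a)^[k + 1] 0 ≤ t := by
      intro t
      rw [Function.iterate_succ_apply', Tmap, if_neg hw, div_le_iff₀ ha]
      constructor <;> intro <;> linarith
    rw [hstep, hstep]
    exact h (k + 1) hk1

lemma SameOrbitCut.affine_sub_one (ha : a ∈ Ioc 0 (2 / 3)) {z z' : ℝ} (hz : z ≤ 1 / (1 - a))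
    (hz' : z' ≤ 1 / (1 - a)) (h : SameOrbitCut a z z') :
    SameOrbitCut a (a * z - 1) (a * z' - 1) := by
  have h1a : 0 < 1 - a := by linarith [ha.2]
  have hbound : ∀ t ≤ 1 / (1 - a), a * t - 1 ≤ (2 * a - 1) / (1 - a) := by
    intro t ht
    have : a * t ≤ a * (1 / (1 - a)) := mul_le_mul_of_nonneg_left ht ha.1.le
    rw [le_div_iff₀ h1a]
    rw [mul_one_div, le_div_iff₀ h1a] at this
    nlinarith
  intro k hk
  by_cases hw : (Tmap a)^[k] 0 ≤ (2 * a - 1) / (1 - a)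
  · have hw1 := Tmap_iterate_lt_one_of_le ha hw
    have hk1 := succ_mem_orbitIndices hk fun hmem => hmem.1.not_ge hw
    have hstep : ∀ t, (Tmap a)^[k] 0 ≤ a * t - 1 ↔ (Tmap a)^[k + 1] 0 ≤ t := by
      intro t
      rw [Function.iterate_succ_apply', Tmap, if_pos hw1, div_le_iff₀ ha.1]
      constructor <;> intro <;> linarith
    rw [hstep, hstep]
    exact h (k + 1) hk1
  · exact iff_of_false (fun h' => hw (h'.trans (hbound z hz)))
      (fun h' => hw (h'.trans (hbound z' hz')))

end Orbit

namespace UplusMem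

variable {a : ℝ} {f : ℝ → ℝ}

lemma exists_eq_saltus (hf : UplusMem a f) :
    ∃ u : ℕ → ℝ, (∀ k ∈ orbitIndices a, 0 < u k) ∧ Summable ((orbitIndices a).indicator u) ∧
      f = saltus (orbitIndices a) (fun k => (Tmap a)^[k] 0) u := by
  obtain ⟨u, hu, hs, hfu⟩ := hf
  refine ⟨u, hu, ?_, funext fun z => ?_⟩
  · convert hs using 2 with k
    simp [Set.indicator_apply, orbitIndices]
  · rw [hfu z, saltus]
    congr 1 with k
    simp [Set.indicator_apply, orbitIndices]

lemma monotone (hf : UplusMem a f) : Monotone f := by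
  obtain ⟨u, hu, hs, rfl⟩ := hf.exists_eq_saltus
  exact saltus_mono hu hs

lemma pos (hf : UplusMem a f) {z : ℝ} (hz : 0 ≤ z) : 0 < f z := by
  obtain ⟨u, hu, hs, rfl⟩ := hf.exists_eq_saltus
  exact saltus_pos hu hs zero_mem_orbitIndices hz

lemma eq_zero_of_neg (hf : UplusMem a f) (ha : 0 ≤ a) {z : ℝ} (hz : z < 0) : f z = 0 := by
  obtain ⟨u, -, -, rfl⟩ := hf.exists_eq_saltus
  exact saltus_eq_zero fun k _ => hz.trans_le (Tmap_iterate_nonneg ha k)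

lemma eq_iff_sameOrbitCut (hf : UplusMem a f) {z z' : ℝ} : f z = f z' ↔ SameOrbitCut a z z' := by
  obtain ⟨u, hu, hs, rfl⟩ := hf.exists_eq_saltus
  exact saltus_eq_saltus_iff hu hs

theorem exists_measurable_transition (ha : a ∈ Ioc 0 (2 / 3)) (hf : UplusMem a f) {e : ℝ}
    (he : e = 1 ∨ e = -1) :
    ∃ Ψ : ℝ → ℝ, Measurable Ψ ∧ Ψ 0 = 0 ∧
      ∀ z ∈ Icc 0 (1 / (1 - a)), Ψ (f z) = f (a * z + e) := by
  have hcut : ∀ z ∈ Icc 0 (1 / (1 - a)), ∀ z' ∈ Icc 0 (1 / (1 - a)),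
      f z = f z' → f (a * z + e) = f (a * z' + e) := by
    intro z hz z' hz' hzz'
    rw [hf.eq_iff_sameOrbitCut] at hzz' ⊢
    rcases he with rfl | rfl
    · exact hzz'.affine_add_one ha.1 hz.1 hz'.1
    · simpa only [← sub_eq_add_neg] using hzz'.affine_sub_one ha hz.2 hz'.2
  have hFmono : Monotone fun z => f (a * z + e) :=
    hf.monotone.comp fun z z' h => by gcongr; exact ha.1.le
  obtain ⟨Φ, hΦ, hΦf⟩ :=
    exists_monotone_comp_eq_of_monotoneOn (hf.monotone.monotoneOn _) (hFmono.monotoneOn _) hcut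
  -- `0` is the state of the killed chain; `f` is positive on `[0, 1/(1-a)]`
  refine ⟨fun y => if y = 0 then 0 else Φ y,
    Measurable.ite (measurableSet_singleton 0) measurable_const hΦ.measurable, if_pos rfl,
    fun z hz => ?_⟩
  simp only [if_neg (hf.pos hz.1).ne', hΦf z hz]

end UplusMem

lemma iInf_natCast_exists_le (P : ℕ → Prop) :
    ⨅ (n : ℕ) (_ : ∃ k ≤ n, P k), (n : ℕ∞) = ⨅ (n : ℕ) (_ : P n), (n : ℕ∞) :=
  le_antisymm (le_iInf₂ fun n hn => iInf₂_le n ⟨n, le_rfl, hn⟩)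
    (le_iInf₂ fun _ ⟨k, hkn, hk⟩ => (iInf₂_le k hk).trans (Nat.cast_le.2 hkn))

def killed (f : ℝ → ℝ) (s : ℕ → ℝ) (n : ℕ) : ℝ := if ∀ k ≤ n, 0 ≤ s k then f (s n) else 0

section Killed

variable {f : ℝ → ℝ} {s : ℕ → ℝ}

lemma killed_eq_zero_iff (hf : ∀ z, 0 ≤ z → 0 < f z) {n : ℕ} :
    killed f s n = 0 ↔ ∃ k ≤ n, s k < 0 := by
  unfold killed
  split_ifs with halive
  · simpa only [(hf _ (halive n le_rfl)).ne', false_iff, not_exists, not_and, not_lt]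
  · push Not at halive
    simpa only [true_iff] using halive

lemma iInf_lt_zero_eq_iInf_killed_eq_zero (hf : ∀ z, 0 ≤ z → 0 < f z) (hs : 0 ≤ s 0) :
    ⨅ (n : ℕ) (_ : s n < 0), (n : ℕ∞) = ⨅ (n : ℕ) (_ : 1 ≤ n ∧ killed f s n = 0), (n : ℕ∞) := by
  have hzero : ∀ n, (1 ≤ n ∧ killed f s n = 0) ↔ ∃ k ≤ n, s k < 0 := by
    intro n
    rw [killed_eq_zero_iff hf]
    refine ⟨And.right, fun h => ⟨Nat.one_le_iff_ne_zero.2 ?_, h⟩⟩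
    rintro rfl
    obtain ⟨k, hk0, hk⟩ := h
    obtain rfl := Nat.le_zero.1 hk0
    exact hk.not_ge hs
  simp only [hzero, iInf_natCast_exists_le]

lemma killed_succ {Ψ : ℝ → ℝ} {a c e : ℝ} {n : ℕ} (hf : ∀ z < 0, f z = 0) (hΨ0 : Ψ 0 = 0)
    (hΨ : ∀ z ∈ Icc 0 c, Ψ (f z) = f (a * z + e)) (hsc : s n ≤ c)
    (hstep : s (n + 1) = a * s n + e) :
    killed f s (n + 1) = Ψ (killed f s n) := by
  unfold killed
  by_cases halive : ∀ k ≤ n, 0 ≤ s k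
  · rw [if_pos halive, hΨ _ ⟨halive n le_rfl, hsc⟩, ← hstep]
    split_ifs with halive'
    · rfl
    · push Not at halive'
      obtain ⟨k, hk, hsk⟩ := halive'
      rcases Nat.le_succ_iff.1 hk with hk | rfl
      · exact absurd (halive k hk) hsk.not_ge
      · exact (hf _ hsk).symm
  · rw [if_neg halive, if_neg fun h => halive fun k hk => h k (hk.trans n.le_succ), hΨ0]

lemma measurable_killed {Ω : Type*} {m : MeasurableSpace Ω} (hf : Measurable f)
    {X : ℕ → Ω → ℝ} {n : ℕ} (hX : ∀ k ≤ n, Measurable[m] (X k)) :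
    Measurable[m] fun ω => killed f (fun k => X k ω) n := by
  refine Measurable.ite ?_ (hf.comp (hX n le_rfl)) measurable_const
  simp only [Set.ofPred_forall]
  exact MeasurableSet.iInter fun k => MeasurableSet.iInter fun hk =>
    measurableSet_le measurable_const (hX k hk)

end Killed

lemma le_one_div_one_sub_of_ar1 {a : ℝ} {s ε : ℕ → ℝ} (ha : a ∈ Ico 0 1)
    (h0 : s 0 ≤ 1 / (1 - a)) (hε : ∀ n, ε (n + 1) ≤ 1) (hrec : ∀ n, s (n + 1) = a * s n + ε (n + 1))
    (n : ℕ) : s n ≤ 1 / (1 - a) := by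
  induction n with
  | zero => exact h0
  | succ n ih =>
    have hfix : a * (1 / (1 - a)) + 1 = 1 / (1 - a) := by
      field_simp [(sub_pos.2 ha.2).ne']
      ring
    rw [hrec]
    nlinarith [hε n, mul_le_mul_of_nonneg_left ih ha.1]

theorem condExp_comp_indep_ae_eq_sum {Ω β γ : Type*} {m mΩ : MeasurableSpace Ω} [MeasurableSpace β]
    [MeasurableSingletonClass β] [MeasurableSpace γ] {μ : Measure Ω} [IsFiniteMeasure μ]
    (hm : m ≤ mΩ) {ξ : Ω → β} (hξ : Measurable ξ)
    (hind : Indep (MeasurableSpace.comap ξ inferInstance) m μ) {S : Finset β}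
    (hS : ∀ᵐ ω ∂μ, ξ ω ∈ S) {Z : Ω → γ} (hZ : Measurable[m] Z) {φ : β → γ → ℝ}
    (hφ : ∀ e ∈ S, Measurable (φ e)) {C : ℝ} (hC : ∀ e y, |φ e y| ≤ C) :
    μ[fun ω => φ (ξ ω) (Z ω) | m] =ᵐ[μ] fun ω => ∑ e ∈ S, μ.real {ω | ξ ω = e} * φ e (Z ω) := by
  set I : β → Ω → ℝ := fun e => {ω | ξ ω = e}.indicator 1
  have hmE : ∀ e, MeasurableSet {ω | ξ ω = e} := fun e => hξ (measurableSet_singleton e)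
  have hmI : ∀ e, Measurable[MeasurableSpace.comap ξ inferInstance] (I e) := fun e =>
    Measurable.indicator (f := 1) measurable_const ⟨{e}, measurableSet_singleton e, rfl⟩
  have hIint : ∀ e, Integrable (I e) μ := fun e => (integrable_const (1 : ℝ)).indicator (hmE e)
  have hφZ : ∀ e ∈ S, Measurable[m] fun ω => φ e (Z ω) := fun e he => (hφ e he).comp hZ
  have hint : ∀ e ∈ S, Integrable ((fun ω => φ e (Z ω)) * I e) μ := fun e he =>
    (hIint e).bdd_mul ((hφZ e he).mono hm le_rfl).aestronglyMeasurable
      (ae_of_all _ fun ω => hC e (Z ω))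
  have hsplit : (fun ω => φ (ξ ω) (Z ω)) =ᵐ[μ] ∑ e ∈ S, (fun ω => φ e (Z ω)) * I e := by
    filter_upwards [hS] with ω hω
    rw [Finset.sum_apply,
      Finset.sum_eq_single_of_mem (ξ ω) hω fun e _ he => by simp [I, Ne.symm he]]
    simp [I]
  have hcondI : ∀ e, μ[I e | m] =ᵐ[μ] fun _ => μ.real {ω | ξ ω = e} := fun e =>
    (condExp_indep_eq hξ.comap_le hm (hmI e).stronglyMeasurable hind).trans <| .of_eq <| by
      rw [integral_indicator_one (hmE e)]
  have hterms : ∀ᵐ ω ∂μ, ∀ e ∈ S, μ[(fun ω => φ e (Z ω)) * I e | m] ω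
      = μ.real {ω | ξ ω = e} * φ e (Z ω) := by
    refine (eventually_all_finset S).2 fun e he => ?_
    filter_upwards [condExp_mul_of_stronglyMeasurable_left (hφZ e he).stronglyMeasurable
      (hint e he) (hIint e), hcondI e] with ω h1 h2
    rw [h1, Pi.mul_apply, h2, mul_comm]
  calc μ[fun ω => φ (ξ ω) (Z ω) | m]
      =ᵐ[μ] μ[∑ e ∈ S, (fun ω => φ e (Z ω)) * I e | m] := condExp_congr_ae hsplit
    _ =ᵐ[μ] ∑ e ∈ S, μ[(fun ω => φ e (Z ω)) * I e | m] := condExp_finsetSum hint m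
    _ =ᵐ[μ] fun ω => ∑ e ∈ S, μ.real {ω | ξ ω = e} * φ e (Z ω) := by
      filter_upwards [hterms] with ω hω
      rw [Finset.sum_apply]
      exact Finset.sum_congr rfl hω

section Filtration

variable {Ω β : Type*} {mΩ : MeasurableSpace Ω} [MeasurableSpace β] {μ : Measure Ω}

/-- `σ(ξ_1, …, ξ_n)`. -/
abbrev sigmaUpTo (ξ : ℕ → Ω → β) (n : ℕ) : MeasurableSpace Ω :=
  ⨆ i ∈ Finset.Icc 1 n, MeasurableSpace.comap (ξ i) inferInstance

lemma sigmaUpTo_mono (ξ : ℕ → Ω → β) {m n : ℕ} (hmn : m ≤ n) : sigmaUpTo ξ m ≤ sigmaUpTo ξ n :=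
  biSup_mono fun _ hi => Finset.Icc_subset_Icc_right hmn hi

lemma sigmaUpTo_le {ξ : ℕ → Ω → β} (hξ : ∀ i, Measurable (ξ i)) (n : ℕ) : sigmaUpTo ξ n ≤ mΩ :=
  iSup₂_le fun i _ => (hξ i).comap_le

lemma measurable_sigmaUpTo_of_mem (ξ : ℕ → Ω → β) {i n : ℕ} (hi : i ∈ Finset.Icc 1 n) :
    Measurable[sigmaUpTo ξ n] (ξ i) :=
  Measurable.of_comap_le <|
    le_iSup₂ (f := fun i (_ : i ∈ Finset.Icc 1 n) => MeasurableSpace.comap (ξ i) inferInstance) i hi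

lemma _root_.ProbabilityTheory.iIndepFun.indep_comap_sigmaUpTo {ξ : ℕ → Ω → β}
    (hind : iIndepFun ξ μ) (hξ : ∀ i, Measurable (ξ i)) (n : ℕ) :
    Indep (MeasurableSpace.comap (ξ (n + 1)) inferInstance) (sigmaUpTo ξ n) μ := by
  have h := indep_iSup_of_disjoint (fun i => (hξ i).comap_le) hind.iIndep
    (S := {n + 1}) (T := ↑(Finset.Icc 1 n)) (by simp)
  simpa only [Set.mem_singleton_iff, iSup_iSup_eq_left, Finset.mem_coe] using h

lemma measurable_sigmaUpTo_of_ar1 {ξ X : ℕ → Ω → ℝ} {a x : ℝ} (hX0 : ∀ ω, X 0 ω = x)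
    (hXrec : ∀ n ω, X (n + 1) ω = a * X n ω + ξ (n + 1) ω) (n : ℕ) :
    Measurable[sigmaUpTo ξ n] (X n) := by
  induction n with
  | zero => simpa only [funext hX0] using measurable_const
  | succ n ih =>
    rw [funext (hXrec n)]
    exact ((ih.mono (sigmaUpTo_mono ξ n.le_succ) le_rfl).const_mul a).add
      (measurable_sigmaUpTo_of_mem ξ (by simp))

lemma ae_mem_pair_of_measure_eq {ξ : Ω → ℝ} [IsProbabilityMeasure μ] (hξ : Measurable ξ) {p : ℝ}
    (hp : p ∈ Icc 0 1) (h1 : μ {ω | ξ ω = 1} = ENNReal.ofReal p)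
    (h2 : μ {ω | ξ ω = -1} = ENNReal.ofReal (1 - p)) :
    ∀ᵐ ω ∂μ, ξ ω ∈ ({1, -1} : Finset ℝ) := by
  have hset : {ω | ξ ω ∈ ({1, -1} : Finset ℝ)} = {ω | ξ ω = 1} ∪ {ω | ξ ω = -1} := by
    ext; simp
  have hm1 : MeasurableSet {ω | ξ ω = 1} := measurableSet_eq_fun hξ measurable_const
  have hm2 : MeasurableSet {ω | ξ ω = -1} := measurableSet_eq_fun hξ measurable_const
  have hdisj : Disjoint {ω | ξ ω = 1} {ω | ξ ω = -1} :=
    Set.disjoint_left.2 fun ω (h1 : ξ ω = 1) (h2 : ξ ω = -1) => by norm_num [h1] at h2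
  rw [ae_iff_measure_eq (hset ▸ hm1.union hm2).nullMeasurableSet, hset,
    measure_union hdisj hm2, h1, h2, ← ENNReal.ofReal_add hp.1 (by linarith [hp.2]),
    add_sub_cancel, ENNReal.ofReal_one, measure_univ]

end Filtration

theorem lumped_chain_is_markov
    {Ω : Type*} [mΩ : MeasurableSpace Ω] (μ : Measure Ω) [IsProbabilityMeasure μ]
    (a p : ℝ) (ha : a ∈ Set.Ioc (0 : ℝ) (2/3)) (hp : p ∈ Set.Ioo (0 : ℝ) 1)
    (ξ : ℕ → Ω → ℝ) (hmeas : ∀ n, Measurable (ξ n))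
    (hindep : iIndepFun ξ μ)
    (hdist1 : ∀ n, μ {ω | ξ n ω = 1} = ENNReal.ofReal p)
    (hdist2 : ∀ n, μ {ω | ξ n ω = -1} = ENNReal.ofReal (1 - p))
    (X : ℝ → ℕ → Ω → ℝ)
    (hX0 : ∀ x ω, X x 0 ω = x)
    (hXrec : ∀ x n ω, X x (n + 1) ω = a * X x n ω + ξ (n + 1) ω)
    (f : ℝ → ℝ) (hf : UplusMem a f)
    (x : ℝ) (hx : x ∈ Set.Icc (0 : ℝ) (1 / (1 - a)))
    (Y : ℕ → Ω → ℝ)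
    (hY : ∀ n ω, Y n ω = if ∀ k ≤ n, 0 ≤ X x k ω then f (X x n ω) else 0) :
    (∀ᵐ ω ∂μ,
      (⨅ (n : ℕ) (_ : X x n ω < 0), (n : ℕ∞))
        = ⨅ (n : ℕ) (_ : 1 ≤ n ∧ Y n ω = 0), (n : ℕ∞)) ∧
    ∀ g : ℝ → ℝ, Measurable g → (∃ C : ℝ, ∀ t, |g t| ≤ C) →
      ∃ h : ℝ → ℝ, Measurable h ∧ ∀ n : ℕ,
        μ[(fun ω => g (Y (n + 1) ω)) |
            ⨆ i ∈ Finset.Icc 1 n, MeasurableSpace.comap (ξ i) inferInstance]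
          =ᵐ[μ] fun ω => h (Y n ω) := by
  have hfpos : ∀ z, 0 ≤ z → 0 < f z := fun _ => hf.pos
  have hYk : ∀ n ω, Y n ω = killed f (fun k => X x k ω) n := hY
  refine ⟨ae_of_all μ fun ω => ?_, fun g hg ⟨C, hC⟩ => ?_⟩
  · simp only [hYk]
    exact iInf_lt_zero_eq_iInf_killed_eq_zero hfpos (by rw [hX0]; exact hx.1)
  choose! Ψ hΨm hΨ0 hΨ using fun e (he : e = 1 ∨ e = -1) =>
    hf.exists_measurable_transition ha he
  have hpm : ∀ᵐ ω ∂μ, ∀ n, ξ n ω ∈ ({1, -1} : Finset ℝ) := ae_all_iff.2 fun n =>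
    ae_mem_pair_of_measure_eq (hmeas n) (Ioo_subset_Icc_self hp) (hdist1 n) (hdist2 n)
  refine ⟨fun y => p * g (Ψ 1 y) + (1 - p) * g (Ψ (-1) y),
    ((hg.comp (hΨm 1 (Or.inl rfl))).const_mul p).add
      ((hg.comp (hΨm (-1) (Or.inr rfl))).const_mul (1 - p)), fun n => ?_⟩
  have hrec : (fun ω => g (Y (n + 1) ω)) =ᵐ[μ] fun ω => g (Ψ (ξ (n + 1) ω) (Y n ω)) := by
    filter_upwards [hpm] with ω hω
    have hξ : ∀ k, ξ k ω = 1 ∨ ξ k ω = -1 := fun k => by simpa using hω k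
    have hXc := le_one_div_one_sub_of_ar1 (s := fun k => X x k ω) (ε := fun k => ξ k ω)
      ⟨ha.1.le, by linarith [ha.2]⟩ (by rw [hX0]; exact hx.2)
      (fun k => by rcases hξ (k + 1) with h | h <;> norm_num [h])
      (hXrec x · ω) n
    rw [hYk, hYk, killed_succ (fun _ => hf.eq_zero_of_neg ha.1.le) (hΨ0 _ (hξ _)) (hΨ _ (hξ _))
      hXc (hXrec x n ω)]
  have hYm : Measurable[sigmaUpTo ξ n] (Y n) := by
    rw [funext (hYk n)]
    exact measurable_killed hf.monotone.measurable fun k hk =>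
      (measurable_sigmaUpTo_of_ar1 (hX0 x) (hXrec x) k).mono (sigmaUpTo_mono ξ hk) le_rfl
  refine (condExp_congr_ae hrec).trans <| (condExp_comp_indep_ae_eq_sum (sigmaUpTo_le hmeas n)
    (hmeas (n + 1)) (hindep.indep_comap_sigmaUpTo hmeas n) (hpm.mono fun ω h => h (n + 1)) hYm
    (fun e he => hg.comp (hΨm e (by simpa using he))) fun e y => hC (Ψ e y)).trans <| .of_eq ?_
  funext ω
  rw [Finset.sum_pair (by norm_num), measureReal_def, hdist1, measureReal_def, hdist2,
    ENNReal.toReal_ofReal hp.1.le, ENNReal.toReal_ofReal (by linarith [hp.2])]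
  rfl

end
end

section
/- Let a ∈ (1/2, 2/3) and let k ≥ 1 be an integer. Define G_k = ⋃_{n=0}^k (T_a^n)^{−1}({0}) ∩ {x ∈ [0,1/(1−a)] : κ_a(x) ≥ k}, D_k = ⋃_{n=0}^{k−1} (T_a^n)^{−1}({(2a−1)/(1−a)}) ∪ {1/(1−a)}, and g_k(x) = max{y ∈ G_k : y ≤ x}. Then D_k is finite, the set {x ∈ [0,1/(1−a)] : κ_a(x) ≥ k} equals the union of the pairwise disjoint closed intervals [g_k(y), y] over y ∈ D_k, the set of left endpoints of these intervals is exactly G_k, and on each interval [g_k(y), y] the functions δ_0, δ_1, …, δ_{k−1} are constant while the maps x ↦ T_a^j(x) for 1 ≤ j ≤ k are continuous and strictly increasing. -/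
open MeasureTheory Filter Set ProbabilityTheory
open scoped ENNReal Classical Topology

noncomputable section

/-- The preimage of `{c}` under `T_a^n`, within the points of `[0, 1/(1-a)]` whose first `n`
iterates are defined (i.e. `κ_a(x) ≥ n`). -/
def preimSet (a : ℝ) (n : ℕ) (c : ℝ) : Set ℝ :=
  {x | x ∈ Set.Icc (0 : ℝ) (1 / (1 - a)) ∧ (n : ℕ∞) ≤ kappa a x ∧ (Tmap a)^[n] x = c}

/-- `G_k = ⋃_{n=0}^k (T_a^n)⁻¹({0}) ∩ {κ_a ≥ k}`. -/
def Gset (a : ℝ) (k : ℕ) : Set ℝ :=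
  (⋃ n ≤ k, preimSet a n 0) ∩ {x | (k : ℕ∞) ≤ kappa a x}

/-- `D_k = ⋃_{n=0}^{k-1} (T_a^n)⁻¹({(2a-1)/(1-a)}) ∪ {1/(1-a)}`. -/
def Dset (a : ℝ) (k : ℕ) : Set ℝ :=
  (⋃ n < k, preimSet a n ((2 * a - 1) / (1 - a))) ∪ {1 / (1 - a)}

/-- `g_k(x) = max{y ∈ G_k : y ≤ x}`. -/
def gfun (a : ℝ) (k : ℕ) (x : ℝ) : ℝ := sSup {y | y ∈ Gset a k ∧ y ≤ x}

-- abbreviations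
def bpt (a : ℝ) : ℝ := (2 * a - 1) / (1 - a)
def Mpt (a : ℝ) : ℝ := 1 / (1 - a)

lemma kappa_ge (a x : ℝ) (k : ℕ) :
    (k : ℕ∞) ≤ kappa a x ↔ ∀ i < k, (Tmap a)^[i] x ∉ Set.Ioo (bpt a) 1 := by
  unfold kappa bpt
  rw [le_iInf_iff]
  constructor
  · intro h i hik hmem
    have := (le_iInf_iff.1 (h i)) hmem
    rw [Nat.cast_le] at this
    omega
  · intro h i
    rw [le_iInf_iff]
    intro hmem
    rw [Nat.cast_le]
    by_contra hlt
    exact h i (by omega) hmem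

section Params
variable {a : ℝ} (ha : a ∈ Set.Ioo (1/2 : ℝ) (2/3))
include ha

lemma ha0 : 0 < a := lt_trans (by norm_num) ha.1
lemma h1a : 0 < 1 - a := by have := ha.2; linarith
lemma hb0 : 0 < bpt a := div_pos (by have := ha.1; linarith) (h1a ha)
lemma hb1 : bpt a < 1 := by
  rw [bpt, div_lt_one (h1a ha)]; have := ha.2; linarith
lemma hM1 : 1 < Mpt a := by
  rw [Mpt, lt_div_iff₀ (h1a ha)]; have := ha.1; linarith

omit ha in lemma Tmap_of_lt {x : ℝ} (h : x < 1) : Tmap a x = (x + 1) / a := if_pos h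
omit ha in lemma Tmap_of_ge {x : ℝ} (h : 1 ≤ x) : Tmap a x = (x - 1) / a := if_neg (not_lt.2 h)

lemma T_b : Tmap a (bpt a) = Mpt a := by
  rw [Tmap_of_lt (hb1 ha), bpt, Mpt]
  have h1 : (1 : ℝ) - a ≠ 0 := ne_of_gt (h1a ha)
  have h2 : a ≠ 0 := ne_of_gt (ha0 ha)
  field_simp
  ring

lemma T_M : Tmap a (Mpt a) = Mpt a := by
  rw [Tmap_of_ge (le_of_lt (hM1 ha)), Mpt]
  have h1 : (1 : ℝ) - a ≠ 0 := ne_of_gt (h1a ha)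
  have h2 : a ≠ 0 := ne_of_gt (ha0 ha)
  field_simp
  ring

lemma T_1 : Tmap a 1 = 0 := by
  rw [Tmap_of_ge le_rfl]; simp

lemma T_nonneg {x : ℝ} (hx : 0 ≤ x) : 0 ≤ Tmap a x := by
  unfold Tmap
  have := ha0 ha
  split
  · next h => positivity
  · next h => exact div_nonneg (by linarith [not_lt.1 h]) this.le

lemma T_eq_zero {t : ℝ} (ht : 0 ≤ t) (h : Tmap a t = 0) : t = 1 := by
  unfold Tmap at h
  split at h
  · exfalso
    rw [div_eq_zero_iff] at h
    rcases h with h | h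
    · linarith
    · exact ne_of_gt (ha0 ha) h
  · rw [div_eq_zero_iff] at h
    rcases h with h | h
    · linarith
    · exact absurd h (ne_of_gt (ha0 ha))

lemma strictMonoOn_T_Iio : StrictMonoOn (Tmap a) (Set.Iio 1) := by
  intro x hx y hy hxy
  rw [Tmap_of_lt hx, Tmap_of_lt hy]
  exact (div_lt_div_iff_of_pos_right (ha0 ha)).2 (by linarith)

end Params



section P2
variable {a : ℝ} (ha : a ∈ Set.Ioo (1/2 : ℝ) (2/3))
include ha

lemma strictMonoOn_T_Ici : StrictMonoOn (Tmap a) (Set.Ici 1) := by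
  intro x hx y hy hxy
  rw [Tmap_of_ge hx, Tmap_of_ge hy]
  exact (div_lt_div_iff_of_pos_right (ha0 ha)).2 (by linarith)

lemma continuousOn_T_Iio : ContinuousOn (Tmap a) (Set.Iio 1) := by
  apply ContinuousOn.congr (f := fun x => (x + 1) / a)
  · exact (continuous_id.add continuous_const).div_const a |>.continuousOn
  · intro x hx; exact Tmap_of_lt (a := a) hx

lemma continuousOn_T_Ici : ContinuousOn (Tmap a) (Set.Ici 1) := by
  apply ContinuousOn.congr (f := fun x => (x - 1) / a)
  · exact (continuous_id.sub continuous_const).div_const a |>.continuousOn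
  · intro x hx; exact Tmap_of_ge (a := a) hx

end P2
section P3
variable {a : ℝ} (ha : a ∈ Set.Ioo (1/2 : ℝ) (2/3))

def Ak (a : ℝ) (k : ℕ) : Set ℝ :=
  {x | x ∈ Set.Icc 0 (Mpt a) ∧ ∀ i < k, (Tmap a)^[i] x ∉ Set.Ioo (bpt a) 1}

def Qk (a : ℝ) (k : ℕ) (y g : ℝ) : Prop :=
  g ∈ Gset a k ∧ g ≤ y ∧ y ∈ Dset a k ∧
  Gset a k ∩ Set.Icc g y = {g} ∧
  Dset a k ∩ Set.Icc g y = {y} ∧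
  (∀ i < k, (∀ x ∈ Set.Icc g y, (Tmap a)^[i] x < 1) ∨
    (∀ x ∈ Set.Icc g y, 1 ≤ (Tmap a)^[i] x)) ∧
  Set.Icc g y ⊆ Ak a k ∧
  (Tmap a)^[k] y = Mpt a ∧ 0 ≤ (Tmap a)^[k] g

def Pk (a : ℝ) (k : ℕ) : Prop :=
  (Dset a k).Finite ∧ (∀ y ∈ Dset a k, ∃ g, Qk a k y g) ∧
  ∀ x ∈ Ak a k, ∃ y g, Qk a k y g ∧ x ∈ Set.Icc g y

omit ha in
lemma mem_Ak (a : ℝ) (k : ℕ) (x : ℝ) :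
    x ∈ Ak a k ↔ x ∈ Set.Icc 0 (Mpt a) ∧ (k : ℕ∞) ≤ kappa a x := by
  rw [Ak, Set.mem_setOf_eq, kappa_ge]

omit ha in
lemma Ak_succ (a : ℝ) (k : ℕ) (x : ℝ) :
    x ∈ Ak a (k + 1) ↔ x ∈ Ak a k ∧ (Tmap a)^[k] x ∉ Set.Ioo (bpt a) 1 := by
  simp only [Ak, Set.mem_setOf_eq]
  constructor
  · intro ⟨h1, h2⟩
    exact ⟨⟨h1, fun i hi => h2 i (by omega)⟩, h2 k (by omega)⟩
  · intro ⟨⟨h1, h2⟩, h3⟩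
    refine ⟨h1, fun i hi => ?_⟩
    rcases Nat.lt_succ_iff_lt_or_eq.1 hi with h | h
    · exact h2 i h
    · rw [h]; exact h3

include ha in
/-- key monotonicity/continuity from branch constancy -/
lemma iter_mono_cont {g y : ℝ} {k : ℕ}
    (hbr : ∀ i < k, (∀ x ∈ Set.Icc g y, (Tmap a)^[i] x < 1) ∨
      (∀ x ∈ Set.Icc g y, 1 ≤ (Tmap a)^[i] x)) :
    ∀ j ≤ k, StrictMonoOn ((Tmap a)^[j]) (Set.Icc g y) ∧
      ContinuousOn ((Tmap a)^[j]) (Set.Icc g y) := by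
  intro j hj
  induction j with
  | zero =>
    rw [Function.iterate_zero]
    exact ⟨fun x hx y' hy' h => h, continuous_id.continuousOn⟩
  | succ n ih =>
    obtain ⟨hm, hc⟩ := ih (by omega)
    have hbn := hbr n (by omega)
    rw [Function.iterate_succ']
    rcases hbn with hlt | hge
    · have hmap : Set.MapsTo ((Tmap a)^[n]) (Set.Icc g y) (Set.Iio 1) :=
        fun x hx => hlt x hx
      exact ⟨(strictMonoOn_T_Iio ha).comp hm hmap,
        (continuousOn_T_Iio ha).comp hc hmap⟩
    · have hmap : Set.MapsTo ((Tmap a)^[n]) (Set.Icc g y) (Set.Ici 1) :=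
        fun x hx => hge x hx
      exact ⟨(strictMonoOn_T_Ici ha).comp hm hmap,
        (continuousOn_T_Ici ha).comp hc hmap⟩

omit ha in
lemma Q_gfun {k : ℕ} {y g : ℝ} (hq : Qk a k y g) : gfun a k y = g := by
  obtain ⟨hg, hgy, -, hG, -⟩ := hq
  have hgreat : IsGreatest {z | z ∈ Gset a k ∧ z ≤ y} g := by
    refine ⟨⟨hg, hgy⟩, fun z hz => ?_⟩
    by_contra hzg
    push_neg at hzg
    have : z ∈ Gset a k ∩ Set.Icc g y := ⟨hz.1, hzg.le, hz.2⟩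
    rw [hG] at this
    exact absurd this (ne_of_gt hzg)
  rw [gfun]; exact hgreat.csSup_eq

end P3
section P4
variable {a : ℝ} (ha : a ∈ Set.Ioo (1/2 : ℝ) (2/3))

omit ha in
lemma mem_preim {n : ℕ} {c x : ℝ} :
    x ∈ preimSet a n c ↔ x ∈ Set.Icc 0 (Mpt a) ∧
      (∀ i < n, (Tmap a)^[i] x ∉ Set.Ioo (bpt a) 1) ∧ (Tmap a)^[n] x = c := by
  rw [preimSet, Set.mem_setOf_eq, kappa_ge]; rfl

omit ha in
lemma Dset_succ (k : ℕ) : Dset a (k + 1) = Dset a k ∪ preimSet a k (bpt a) := by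
  have : (⋃ n < k + 1, preimSet a n ((2*a-1)/(1-a)))
      = (⋃ n < k, preimSet a n ((2*a-1)/(1-a))) ∪ preimSet a k ((2*a-1)/(1-a)) := by
    ext x
    simp only [Set.mem_iUnion, Set.mem_union]
    constructor
    · rintro ⟨n, hn, hx⟩
      rcases Nat.lt_succ_iff_lt_or_eq.1 hn with h | h
      · exact Or.inl ⟨n, h, hx⟩
      · subst h; exact Or.inr hx
    · rintro (⟨n, hn, hx⟩ | hx)
      · exact ⟨n, by omega, hx⟩
      · exact ⟨k, by omega, hx⟩
  rw [Dset, this, Dset, Set.union_right_comm]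
  rfl

omit ha in
lemma Dset_mono {k l : ℕ} (h : k ≤ l) : Dset a k ⊆ Dset a l := by
  intro x hx
  rcases hx with hx | hx
  · left
    simp only [Set.mem_iUnion] at hx ⊢
    obtain ⟨n, hn, h1⟩ := hx
    exact ⟨n, by omega, h1⟩
  · right; exact hx

omit ha in
lemma mem_Gset {k : ℕ} {x : ℝ} :
    x ∈ Gset a k ↔ (∃ n ≤ k, x ∈ preimSet a n 0) ∧
      ∀ i < k, (Tmap a)^[i] x ∉ Set.Ioo (bpt a) 1 := by
  rw [Gset, Set.mem_inter_iff, Set.mem_setOf_eq, kappa_ge]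
  simp only [Set.mem_iUnion, exists_prop]

omit ha in
lemma Gset_subset_Icc {k : ℕ} {x : ℝ} (h : x ∈ Gset a k) : x ∈ Set.Icc 0 (Mpt a) :=
  ((mem_Gset.1 h).1.choose_spec.2 |> fun h' => (mem_preim.1 h').1)

omit ha in
lemma Gset_subset_Ak {k : ℕ} {x : ℝ} (h : x ∈ Gset a k) : x ∈ Ak a k :=
  ⟨Gset_subset_Icc h, (mem_Gset.1 h).2⟩

include ha in
lemma Dset_subset_Icc {k : ℕ} {y : ℝ} (h : y ∈ Dset a k) : y ∈ Set.Icc 0 (Mpt a) := by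
  rcases h with h | h
  · simp only [Set.mem_iUnion] at h
    obtain ⟨n, hn, h1⟩ := h
    exact (mem_preim.1 h1).1
  · have hy : y = Mpt a := h
    subst hy
    exact ⟨le_of_lt (lt_trans one_pos (hM1 ha)), le_rfl⟩

include ha in
lemma D1 : Dset a 1 = {bpt a, Mpt a} := by
  have hb := hb0 ha; have hb1' := hb1 ha; have hM := hM1 ha
  ext x
  simp only [Set.mem_insert_iff, Set.mem_singleton_iff]
  constructor
  · rintro (hx | hx)
    · simp only [Set.mem_iUnion] at hx
      obtain ⟨n, hn, h1⟩ := hx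
      have hn0 : n = 0 := by omega
      subst hn0
      left
      simpa [bpt] using (mem_preim.1 h1).2.2
    · right; exact hx
  · rintro (rfl | rfl)
    · left
      simp only [Set.mem_iUnion]
      refine ⟨0, by omega, mem_preim.2 ⟨⟨hb.le, by linarith⟩,
        fun i hi => absurd hi (by omega), by simp [bpt]⟩⟩
    · right; rfl

include ha in
lemma G1 : Gset a 1 = {0, 1} := by
  have hb := hb0 ha; have hb1' := hb1 ha; have hM := hM1 ha
  ext x
  rw [mem_Gset]
  simp only [Set.mem_insert_iff, Set.mem_singleton_iff]
  constructor
  · rintro ⟨⟨n, hn, h1⟩, h2⟩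
    match n, hn with
    | 0, _ =>
      left
      simpa using (mem_preim.1 h1).2.2
    | 1, _ =>
      right
      obtain ⟨hIcc, -, hT⟩ := mem_preim.1 h1
      rw [Function.iterate_one] at hT
      exact T_eq_zero ha hIcc.1 hT
  · rintro (rfl | rfl)
    · refine ⟨⟨0, by omega, mem_preim.2 ⟨⟨le_rfl, by linarith⟩,
        fun i hi => absurd hi (by omega), by simp⟩⟩, ?_⟩
      intro i hi
      have hi0 : i = 0 := by omega
      subst hi0
      simp only [Function.iterate_zero_apply]
      rintro ⟨h1, h2⟩
      linarith
    · refine ⟨⟨1, le_rfl, mem_preim.2 ⟨⟨by norm_num, hM.le⟩, ?_, ?_⟩⟩, ?_⟩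
      · intro i hi
        have hi0 : i = 0 := by omega
        subst hi0
        simp only [Function.iterate_zero_apply]
        rintro ⟨h1, h2⟩
        linarith
      · rw [Function.iterate_one]; exact T_1 ha
      · intro i hi
        have hi0 : i = 0 := by omega
        subst hi0
        simp only [Function.iterate_zero_apply]
        rintro ⟨h1, h2⟩
        linarith

end P4
section P5
variable {a : ℝ} (ha : a ∈ Set.Ioo (1/2 : ℝ) (2/3))
include ha

lemma Qk_one_b : Qk a 1 (bpt a) 0 := by
  have hb := hb0 ha; have hb1' := hb1 ha; have hM := hM1 ha
  refine ⟨?_, hb.le, ?_, ?_, ?_, ?_, ?_, ?_, ?_⟩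
  · rw [G1 ha]; left; rfl
  · rw [D1 ha]; left; rfl
  · ext x
    rw [G1 ha]
    simp only [Set.mem_inter_iff, Set.mem_insert_iff, Set.mem_singleton_iff, Set.mem_Icc]
    constructor
    · rintro ⟨(rfl | rfl), h1, h2⟩
      · rfl
      · linarith
    · rintro rfl
      exact ⟨Or.inl rfl, le_rfl, hb.le⟩
  · ext x
    rw [D1 ha]
    simp only [Set.mem_inter_iff, Set.mem_insert_iff, Set.mem_singleton_iff, Set.mem_Icc]
    constructor
    · rintro ⟨(rfl | rfl), h1, h2⟩
      · rfl
      · linarith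
    · rintro rfl
      exact ⟨Or.inl rfl, hb.le, le_rfl⟩
  · intro i hi
    have hi0 : i = 0 := by omega
    subst hi0
    left
    intro x hx
    simpa using lt_of_le_of_lt hx.2 hb1'
  · intro x hx
    refine ⟨⟨hx.1, le_trans hx.2 (by linarith)⟩, ?_⟩
    intro i hi
    have hi0 : i = 0 := by omega
    subst hi0
    simp only [Function.iterate_zero_apply]
    rintro ⟨h1, h2⟩
    have := hx.2
    simp only [Set.mem_Icc] at hx
    linarith [hx.2]
  · rw [Function.iterate_one]; exact T_b ha
  · rw [Function.iterate_one]; exact T_nonneg ha le_rfl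

lemma Qk_one_M : Qk a 1 (Mpt a) 1 := by
  have hb := hb0 ha; have hb1' := hb1 ha; have hM := hM1 ha
  refine ⟨?_, hM.le, ?_, ?_, ?_, ?_, ?_, ?_, ?_⟩
  · rw [G1 ha]; right; rfl
  · rw [D1 ha]; right; rfl
  · ext x
    rw [G1 ha]
    simp only [Set.mem_inter_iff, Set.mem_insert_iff, Set.mem_singleton_iff, Set.mem_Icc]
    constructor
    · rintro ⟨(rfl | rfl), h1, h2⟩
      · linarith
      · rfl
    · rintro rfl
      exact ⟨Or.inr rfl, le_rfl, hM.le⟩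
  · ext x
    rw [D1 ha]
    simp only [Set.mem_inter_iff, Set.mem_insert_iff, Set.mem_singleton_iff, Set.mem_Icc]
    constructor
    · rintro ⟨(rfl | rfl), h1, h2⟩
      · linarith
      · rfl
    · rintro rfl
      exact ⟨Or.inr rfl, hM.le, le_rfl⟩
  · intro i hi
    have hi0 : i = 0 := by omega
    subst hi0
    right
    intro x hx
    simpa using hx.1
  · intro x hx
    simp only [Set.mem_Icc] at hx
    refine ⟨⟨by linarith, hx.2⟩, ?_⟩
    intro i hi
    have hi0 : i = 0 := by omega
    subst hi0
    simp only [Function.iterate_zero_apply]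
    rintro ⟨h1, h2⟩
    linarith [hx.1]
  · rw [Function.iterate_one]; exact T_M ha
  · rw [Function.iterate_one, T_1 ha]

lemma Pk_one : Pk a 1 := by
  have hb := hb0 ha; have hb1' := hb1 ha; have hM := hM1 ha
  refine ⟨?_, ?_, ?_⟩
  · rw [D1 ha]
    exact (Set.finite_singleton _).insert _
  · intro y hy
    rw [D1 ha] at hy
    rcases hy with rfl | hy
    · exact ⟨0, Qk_one_b ha⟩
    · rw [Set.mem_singleton_iff.1 hy]
      exact ⟨1, Qk_one_M ha⟩
  · intro x hx
    obtain ⟨⟨hx0, hxM⟩, hni⟩ := hx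
    have h0 := hni 0 one_pos
    simp only [Function.iterate_zero_apply, Set.mem_Ioo, not_and, not_lt] at h0
    rcases le_or_gt x (bpt a) with h | h
    · exact ⟨bpt a, 0, Qk_one_b ha, hx0, h⟩
    · exact ⟨Mpt a, 1, Qk_one_M ha, h0 h, hxM⟩

end P5
section P6
variable {a : ℝ} (ha : a ∈ Set.Ioo (1/2 : ℝ) (2/3))
include ha

lemma Ak_succ_subset (k : ℕ) : Ak a (k+1) ⊆ Ak a k := fun x hx => ((Ak_succ a k x).1 hx).1

lemma Q_step {k : ℕ} {y g g' y' : ℝ} (hq : Qk a k y g)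
    (hg1 : g ≤ g') (hy2 : y' ≤ y) (hgy' : g' ≤ y')
    (hG' : g' ∈ Gset a (k+1)) (hD' : y' ∈ Dset a (k+1))
    (hbrk : (∀ x ∈ Set.Icc g' y', (Tmap a)^[k] x < 1) ∨
      (∀ x ∈ Set.Icc g' y', 1 ≤ (Tmap a)^[k] x))
    (hnotin : ∀ x ∈ Set.Icc g' y', (Tmap a)^[k] x ∉ Set.Ioo (bpt a) 1)
    (hGcap : Gset a (k+1) ∩ Set.Icc g' y' ⊆ {g'})
    (hDcap : Dset a (k+1) ∩ Set.Icc g' y' ⊆ {y'})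
    (hTy' : (Tmap a)^[k+1] y' = Mpt a) (hTg' : 0 ≤ (Tmap a)^[k+1] g') :
    Qk a (k+1) y' g' := by
  obtain ⟨hgG, hgy, hyD, hGc, hDc, hbr, hsubA, hTyM, hTg0⟩ := hq
  have hsub : Set.Icc g' y' ⊆ Set.Icc g y := Set.Icc_subset_Icc hg1 hy2
  refine ⟨hG', hgy', hD', ?_, ?_, ?_, ?_, hTy', hTg'⟩
  · apply Set.Subset.antisymm hGcap
    intro x hx
    rw [Set.mem_singleton_iff.1 hx]
    exact ⟨hG', le_rfl, hgy'⟩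
  · apply Set.Subset.antisymm hDcap
    intro x hx
    rw [Set.mem_singleton_iff.1 hx]
    exact ⟨hD', hgy', le_rfl⟩
  · intro i hi
    rcases Nat.lt_succ_iff_lt_or_eq.1 hi with h | h
    · rcases hbr i h with hl | hr
      · exact Or.inl fun x hx => hl x (hsub hx)
      · exact Or.inr fun x hx => hr x (hsub hx)
    · subst h
      exact hbrk
  · intro x hx
    rw [Ak_succ]
    exact ⟨hsubA (hsub hx), hnotin x hx⟩

end P6
section P7
variable {a : ℝ} (ha : a ∈ Set.Ioo (1/2 : ℝ) (2/3))
include ha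

lemma interval_step {k : ℕ} {y g : ℝ} (hq : Qk a k y g) :
    (∃ p q, Qk a (k+1) p g ∧ Qk a (k+1) y q ∧ p < q ∧
       p ∈ Set.Icc g y ∧ q ∈ Set.Icc g y ∧
       (∀ x ∈ Set.Icc g y, (Tmap a)^[k] x = bpt a → x = p) ∧
       (∀ x ∈ Set.Icc g y, x ∈ Ak a (k+1) → x ∈ Set.Icc g p ∨ x ∈ Set.Icc q y)) ∨
    (∃ q, Qk a (k+1) y q ∧ q ∈ Set.Icc g y ∧
       (∀ x ∈ Set.Icc g y, (Tmap a)^[k] x ≠ bpt a) ∧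
       (∀ x ∈ Set.Icc g y, x ∈ Ak a (k+1) → x ∈ Set.Icc q y)) ∨
    (Qk a (k+1) y g ∧ (∀ x ∈ Set.Icc g y, (Tmap a)^[k] x ≠ bpt a) ∧
       (∀ x ∈ Set.Icc g y, x ∈ Ak a (k+1) → x ∈ Set.Icc g y)) := by
  have hb := hb0 ha; have hb1' := hb1 ha; have hM := hM1 ha
  obtain ⟨hgG, hgy, hyD, hGc, hDc, hbr, hsubA, hTyM, hTg0⟩ := hq
  have hq' : Qk a k y g := ⟨hgG, hgy, hyD, hGc, hDc, hbr, hsubA, hTyM, hTg0⟩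
  have hmono : StrictMonoOn ((Tmap a)^[k]) (Set.Icc g y) :=
    (iter_mono_cont ha hbr k le_rfl).1
  have hcont : ContinuousOn ((Tmap a)^[k]) (Set.Icc g y) :=
    (iter_mono_cont ha hbr k le_rfl).2
  have hgmem : g ∈ Set.Icc g y := ⟨le_rfl, hgy⟩
  have hymem : y ∈ Set.Icc g y := ⟨hgy, le_rfl⟩
  set c := (Tmap a)^[k] g with hc
  have hc0 : 0 ≤ c := hTg0
  have hcM : c ≤ Mpt a := by
    rw [← hTyM]
    exact hmono.monotoneOn hgmem hymem hgy
  have himage : Set.Icc c (Mpt a) ⊆ (Tmap a)^[k] '' Set.Icc g y := by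
    rw [← hTyM]
    exact intermediate_value_Icc hgy hcont
  -- characterization of new G points inside the interval
  have hGchar : ∀ x ∈ Set.Icc g y, x ∈ Gset a (k+1) → x = g ∨ (Tmap a)^[k] x = 1 := by
    intro x hx hxG
    obtain ⟨⟨n, hn, hpre⟩, hκ⟩ := mem_Gset.1 hxG
    rcases Nat.lt_succ_iff_lt_or_eq.1 (Nat.lt_succ_of_le hn) with hnk | hnk
    · left
      have hxGk : x ∈ Gset a k :=
        mem_Gset.2 ⟨⟨n, by omega, hpre⟩, fun i hi => hκ i (by omega)⟩
      have : x ∈ Gset a k ∩ Set.Icc g y := ⟨hxGk, hx⟩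
      rw [hGc] at this
      exact this
    · right
      obtain ⟨hIcc, -, hT⟩ := mem_preim.1 hpre
      rw [hnk, Function.iterate_succ_apply'] at hT
      have hTk0 : 0 ≤ (Tmap a)^[k] x := le_trans hc0 (hmono.monotoneOn hgmem hx hx.1)
      exact T_eq_zero ha hTk0 hT
  -- characterization of new D points inside the interval
  have hDchar : ∀ x ∈ Set.Icc g y, x ∈ Dset a (k+1) → x = y ∨ (Tmap a)^[k] x = bpt a := by
    intro x hx hxD
    rw [Dset_succ] at hxD
    rcases hxD with hxD | hxD
    · left
      have : x ∈ Dset a k ∩ Set.Icc g y := ⟨hxD, hx⟩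
      rw [hDc] at this
      exact this
    · right
      exact (mem_preim.1 hxD).2.2
  -- membership producers
  have hq1G : ∀ x ∈ Set.Icc g y, (Tmap a)^[k] x = 1 → x ∈ Gset a (k+1) := by
    intro x hx hT1
    have hxA : x ∈ Ak a k := hsubA hx
    have hnotio : ∀ i < k + 1, (Tmap a)^[i] x ∉ Set.Ioo (bpt a) 1 := by
      intro i hi
      rcases Nat.lt_succ_iff_lt_or_eq.1 hi with h | h
      · exact hxA.2 i h
      · subst h
        rw [hT1]
        simp
    refine mem_Gset.2 ⟨⟨k+1, le_rfl, mem_preim.2 ⟨hxA.1, hnotio, ?_⟩⟩, hnotio⟩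
    rw [Function.iterate_succ_apply', hT1]
    exact T_1 ha
  have hgG' : (Tmap a)^[k] g ∉ Set.Ioo (bpt a) 1 → g ∈ Gset a (k+1) := by
    intro hcnot
    obtain ⟨⟨n, hn, hpre⟩, hκ⟩ := mem_Gset.1 hgG
    have hnotio : ∀ i < k + 1, (Tmap a)^[i] g ∉ Set.Ioo (bpt a) 1 := by
      intro i hi
      rcases Nat.lt_succ_iff_lt_or_eq.1 hi with h | h
      · exact hκ i h
      · subst h; exact hcnot
    exact mem_Gset.2 ⟨⟨n, by omega, hpre⟩, hnotio⟩
  have hpD : ∀ x ∈ Set.Icc g y, (Tmap a)^[k] x = bpt a → x ∈ Dset a (k+1) := by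
    intro x hx hTb
    rw [Dset_succ]
    right
    exact mem_preim.2 ⟨(hsubA hx).1, (hsubA hx).2, hTb⟩
  have hyD' : y ∈ Dset a (k+1) := Dset_mono (by omega) hyD
  have hTy1 : (Tmap a)^[k+1] y = Mpt a := by
    rw [Function.iterate_succ_apply', hTyM]
    exact T_M ha
  rcases le_or_gt c (bpt a) with hcb | hbc
  · -- case 1 : c ≤ b, two subintervals
    obtain ⟨p, hpmem, hTp⟩ := himage ⟨hcb, by linarith⟩
    obtain ⟨q, hqmem, hTq⟩ := himage (show (1:ℝ) ∈ Set.Icc c (Mpt a) from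
      ⟨by linarith, by linarith⟩)
    have hpq : p < q := by
      by_contra hle
      push_neg at hle
      have := hmono.monotoneOn hqmem hpmem hle
      rw [hTp, hTq] at this
      linarith
    have hinjb : ∀ x ∈ Set.Icc g y, (Tmap a)^[k] x = bpt a → x = p := by
      intro x hx hTx
      exact hmono.injOn hx hpmem (by rw [hTx, hTp])
    have hQ1 : Qk a (k+1) p g := by
      refine Q_step ha hq' le_rfl hpmem.2 hpmem.1 ?_ (hpD p hpmem hTp) ?_ ?_ ?_ ?_ ?_ ?_
      · refine hgG' ?_
        rintro ⟨h1, h2⟩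
        linarith
      · left
        intro x hx
        have hxy : x ∈ Set.Icc g y := ⟨hx.1, le_trans hx.2 hpmem.2⟩
        have := hmono.monotoneOn hxy hpmem hx.2
        rw [hTp] at this
        linarith
      · intro x hx
        have hxy : x ∈ Set.Icc g y := ⟨hx.1, le_trans hx.2 hpmem.2⟩
        have := hmono.monotoneOn hxy hpmem hx.2
        rw [hTp] at this
        rintro ⟨h1, h2⟩
        linarith
      · intro x ⟨hxG, hxI⟩
        have hxy : x ∈ Set.Icc g y := ⟨hxI.1, le_trans hxI.2 hpmem.2⟩
        rcases hGchar x hxy hxG with h | h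
        · exact h
        · exfalso
          have := hmono.monotoneOn hxy hpmem hxI.2
          rw [hTp, h] at this
          linarith
      · intro x ⟨hxD, hxI⟩
        have hxy : x ∈ Set.Icc g y := ⟨hxI.1, le_trans hxI.2 hpmem.2⟩
        rcases hDchar x hxy hxD with h | h
        · have hyp : y = p := le_antisymm (h ▸ hxI.2) hpmem.2
          rw [h, hyp]; rfl
        · exact hinjb x hxy h
      · rw [Function.iterate_succ_apply', hTp]
        exact T_b ha
      · rw [Function.iterate_succ_apply']
        exact T_nonneg ha hc0
    have hQ2 : Qk a (k+1) y q := by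
      refine Q_step ha hq' hqmem.1 le_rfl hqmem.2 (hq1G q hqmem hTq) hyD' ?_ ?_ ?_ ?_
        hTy1 ?_
      · right
        intro x hx
        have hxy : x ∈ Set.Icc g y := ⟨le_trans hqmem.1 hx.1, hx.2⟩
        have := hmono.monotoneOn hqmem hxy hx.1
        rw [hTq] at this
        exact this
      · intro x hx
        have hxy : x ∈ Set.Icc g y := ⟨le_trans hqmem.1 hx.1, hx.2⟩
        have := hmono.monotoneOn hqmem hxy hx.1
        rw [hTq] at this
        rintro ⟨h1, h2⟩
        linarith
      · intro x ⟨hxG, hxI⟩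
        have hxy : x ∈ Set.Icc g y := ⟨le_trans hqmem.1 hxI.1, hxI.2⟩
        rcases hGchar x hxy hxG with h | h
        · exfalso
          have : q ≤ g := h ▸ hxI.1
          have : g ≤ p := hpmem.1
          linarith
        · exact hmono.injOn hxy hqmem (by rw [h, hTq])
      · intro x ⟨hxD, hxI⟩
        have hxy : x ∈ Set.Icc g y := ⟨le_trans hqmem.1 hxI.1, hxI.2⟩
        rcases hDchar x hxy hxD with h | h
        · exact h
        · exfalso
          have := hmono.monotoneOn hqmem hxy hxI.1
          rw [hTq, h] at this
          linarith
      · rw [Function.iterate_succ_apply', hTq, T_1 ha]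
    refine Or.inl ⟨p, q, hQ1, hQ2, hpq, hpmem, hqmem, hinjb, ?_⟩
    intro x hx hxA
    have hT := ((Ak_succ a k x).1 hxA).2
    rw [Set.mem_Ioo] at hT
    push_neg at hT
    rcases lt_or_ge (bpt a) ((Tmap a)^[k] x) with h | h
    · right
      refine ⟨?_, hx.2⟩
      by_contra hlt
      push_neg at hlt
      have := hmono hx hqmem hlt
      rw [hTq] at this
      linarith [hT h]
    · left
      refine ⟨hx.1, ?_⟩
      by_contra hlt
      push_neg at hlt
      have := hmono hpmem hx hlt
      rw [hTp] at this
      linarith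
  · rcases lt_or_ge c 1 with hc1 | hc1
    · -- case 2 : b < c < 1
      obtain ⟨q, hqmem, hTq⟩ := himage (show (1:ℝ) ∈ Set.Icc c (Mpt a) from
        ⟨hc1.le, hM.le⟩)
      have hneb : ∀ x ∈ Set.Icc g y, (Tmap a)^[k] x ≠ bpt a := by
        intro x hx hTx
        have := hmono.monotoneOn hgmem hx hx.1
        rw [hTx] at this
        linarith
      have hQ2 : Qk a (k+1) y q := by
        refine Q_step ha hq' hqmem.1 le_rfl hqmem.2 (hq1G q hqmem hTq) hyD' ?_ ?_ ?_ ?_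
          hTy1 ?_
        · right
          intro x hx
          have hxy : x ∈ Set.Icc g y := ⟨le_trans hqmem.1 hx.1, hx.2⟩
          have := hmono.monotoneOn hqmem hxy hx.1
          rw [hTq] at this
          exact this
        · intro x hx
          have hxy : x ∈ Set.Icc g y := ⟨le_trans hqmem.1 hx.1, hx.2⟩
          have := hmono.monotoneOn hqmem hxy hx.1
          rw [hTq] at this
          rintro ⟨h1, h2⟩
          linarith
        · intro x ⟨hxG, hxI⟩
          have hxy : x ∈ Set.Icc g y := ⟨le_trans hqmem.1 hxI.1, hxI.2⟩
          rcases hGchar x hxy hxG with h | h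
          · exfalso
            have hgq : g < q := by
              by_contra hle
              push_neg at hle
              have := hmono.monotoneOn hqmem hgmem hle
              rw [hTq] at this
              linarith
            have : q ≤ g := h ▸ hxI.1
            linarith
          · exact hmono.injOn hxy hqmem (by rw [h, hTq])
        · intro x ⟨hxD, hxI⟩
          have hxy : x ∈ Set.Icc g y := ⟨le_trans hqmem.1 hxI.1, hxI.2⟩
          rcases hDchar x hxy hxD with h | h
          · exact h
          · exact absurd h (hneb x hxy)
        · rw [Function.iterate_succ_apply', hTq, T_1 ha]
      refine Or.inr (Or.inl ⟨q, hQ2, hqmem, hneb, ?_⟩)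
      intro x hx hxA
      have hT := ((Ak_succ a k x).1 hxA).2
      rw [Set.mem_Ioo] at hT
      push_neg at hT
      have hcx := hmono.monotoneOn hgmem hx hx.1
      refine ⟨?_, hx.2⟩
      by_contra hlt
      push_neg at hlt
      have h2 := hmono hx hqmem hlt
      rw [hTq] at h2
      have := hT (by linarith)
      linarith
    · -- case 3 : 1 ≤ c
      have hneb : ∀ x ∈ Set.Icc g y, (Tmap a)^[k] x ≠ bpt a := by
        intro x hx hTx
        have := hmono.monotoneOn hgmem hx hx.1
        rw [hTx] at this
        linarith
      have hQ3 : Qk a (k+1) y g := by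
        refine Q_step ha hq' le_rfl le_rfl hgy (hgG' ?_) hyD' ?_ ?_ ?_ ?_ hTy1 ?_
        · rintro ⟨h1, h2⟩
          linarith
        · right
          intro x hx
          exact le_trans hc1 (hmono.monotoneOn hgmem hx hx.1)
        · intro x hx
          have := hmono.monotoneOn hgmem hx hx.1
          rintro ⟨h1, h2⟩
          linarith
        · intro x ⟨hxG, hxI⟩
          rcases hGchar x hxI hxG with h | h
          · exact h
          · refine hmono.injOn hxI hgmem ?_
            have h1 := hmono.monotoneOn hgmem hxI hxI.1
            rw [h] at h1 ⊢
            linarith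
        · intro x ⟨hxD, hxI⟩
          rcases hDchar x hxI hxD with h | h
          · exact h
          · exact absurd h (hneb x hxI)
        · rw [Function.iterate_succ_apply']
          exact T_nonneg ha hc0
      exact Or.inr (Or.inr ⟨hQ3, hneb, fun x hx _ => hx⟩)

end P7
section P8
variable {a : ℝ} (ha : a ∈ Set.Ioo (1/2 : ℝ) (2/3))
include ha

lemma Pk_succ (k : ℕ) (hP : Pk a k) : Pk a (k+1) := by
  classical
  obtain ⟨hfin, hD, hcov⟩ := hP
  refine ⟨?_, ?_, ?_⟩
  · -- finiteness
    rw [Dset_succ]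
    refine hfin.union ?_
    have hex : ∀ x : ℝ, x ∈ preimSet a k (bpt a) →
        ∃ yg : ℝ × ℝ, Qk a k yg.1 yg.2 ∧ x ∈ Set.Icc yg.2 yg.1 := by
      intro x hx
      obtain ⟨y, g, hQ, hm⟩ := hcov x ⟨(mem_preim.1 hx).1, (mem_preim.1 hx).2.1⟩
      exact ⟨(y, g), hQ, hm⟩
    set F : ℝ → ℝ × ℝ := fun x =>
      if h : x ∈ preimSet a k (bpt a) then (hex x h).choose else (0, 0) with hF
    have hF1 : ∀ x (h : x ∈ preimSet a k (bpt a)),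
        Qk a k (F x).1 (F x).2 ∧ x ∈ Set.Icc (F x).2 (F x).1 := by
      intro x h
      rw [hF]
      simp only [dif_pos h]
      exact (hex x h).choose_spec
    apply Set.Finite.of_finite_image (f := fun x => (F x).1)
    · apply hfin.subset
      rintro - ⟨x, hx, rfl⟩
      exact ((hF1 x hx).1).2.2.1
    · intro x1 h1 x2 h2 heq
      simp only at heq
      have hQ1 := (hF1 x1 h1).1
      have hQ2 := (hF1 x2 h2).1
      have hm1 := (hF1 x1 h1).2
      have hm2 := (hF1 x2 h2).2
      have hg : (F x1).2 = (F x2).2 := by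
        rw [← Q_gfun hQ1, ← Q_gfun hQ2, heq]
      have hmono : StrictMonoOn ((Tmap a)^[k]) (Set.Icc (F x1).2 (F x1).1) :=
        (iter_mono_cont ha hQ1.2.2.2.2.2.1 k le_rfl).1
      have hm2' : x2 ∈ Set.Icc (F x1).2 (F x1).1 := by
        rw [hg, heq]; exact hm2
      refine hmono.injOn hm1 hm2' ?_
      rw [(mem_preim.1 h1).2.2, (mem_preim.1 h2).2.2]
  · -- existence of left endpoints
    intro y' hy'
    rw [Dset_succ] at hy'
    rcases hy' with hy' | hy'
    · obtain ⟨g, hQ⟩ := hD y' hy'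
      rcases interval_step ha hQ with ⟨p, q, hQ1, hQ2, -⟩ | ⟨q, hQ2, -⟩ | ⟨hQ3, -⟩
      exacts [⟨q, hQ2⟩, ⟨q, hQ2⟩, ⟨g, hQ3⟩]
    · have hy'A : y' ∈ Ak a k := ⟨(mem_preim.1 hy').1, (mem_preim.1 hy').2.1⟩
      obtain ⟨y, g, hQ, hmem⟩ := hcov y' hy'A
      rcases interval_step ha hQ with
        ⟨p, q, hQ1, hQ2, hpq, hpmem, hqmem, hinj, hcb⟩ |
        ⟨q, hQ2, hqmem, hne, -⟩ | ⟨hQ3, hne, -⟩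
      · have hyp : y' = p := hinj y' hmem (mem_preim.1 hy').2.2
        exact hyp ▸ ⟨g, hQ1⟩
      · exact absurd (mem_preim.1 hy').2.2 (hne y' hmem)
      · exact absurd (mem_preim.1 hy').2.2 (hne y' hmem)
  · -- coverage
    intro x hx
    have hxk : x ∈ Ak a k := Ak_succ_subset ha k hx
    obtain ⟨y, g, hQ, hmem⟩ := hcov x hxk
    rcases interval_step ha hQ with
      ⟨p, q, hQ1, hQ2, hpq, hpmem, hqmem, hinj, hcb⟩ |
      ⟨q, hQ2, hqmem, hne, hcb⟩ | ⟨hQ3, hne, hcb⟩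
    · rcases hcb x hmem hx with h | h
      · exact ⟨p, g, hQ1, h⟩
      · exact ⟨y, q, hQ2, h⟩
    · exact ⟨y, q, hQ2, hcb x hmem hx⟩
    · exact ⟨y, g, hQ3, hcb x hmem hx⟩

lemma Pk_all (k : ℕ) (hk : 1 ≤ k) : Pk a k := by
  induction k, hk using Nat.le_induction with
  | base => exact Pk_one ha
  | succ n hn ih => exact Pk_succ ha n ih

end P8
theorem structure_of_domain_of_iterates
    (a : ℝ) (ha : a ∈ Set.Ioo (1/2 : ℝ) (2/3)) (k : ℕ) (hk : 1 ≤ k) :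
    (Dset a k).Finite ∧
    ({x | x ∈ Set.Icc (0 : ℝ) (1 / (1 - a)) ∧ (k : ℕ∞) ≤ kappa a x}
      = ⋃ y ∈ Dset a k, Set.Icc (gfun a k y) y) ∧
    ((Dset a k).Pairwise fun y z =>
      Disjoint (Set.Icc (gfun a k y) y) (Set.Icc (gfun a k z) z)) ∧
    (gfun a k '' Dset a k = Gset a k) ∧
    ∀ y ∈ Dset a k,
      (∀ j < k, ∀ x₁ ∈ Set.Icc (gfun a k y) y, ∀ x₂ ∈ Set.Icc (gfun a k y) y,
        deltaF a x₁ j = deltaF a x₂ j) ∧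
      (∀ j : ℕ, 1 ≤ j → j ≤ k →
        ContinuousOn ((Tmap a)^[j]) (Set.Icc (gfun a k y) y) ∧
        StrictMonoOn ((Tmap a)^[j]) (Set.Icc (gfun a k y) y)) := by
  obtain ⟨hfin, hD, hcov⟩ := Pk_all ha k hk
  have hAk : {x | x ∈ Set.Icc (0 : ℝ) (1 / (1 - a)) ∧ (k : ℕ∞) ≤ kappa a x} = Ak a k := by
    ext x
    rw [Set.mem_setOf_eq, mem_Ak]
    rfl
  refine ⟨hfin, ?_, ?_, ?_, ?_⟩
  · rw [hAk]
    ext x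
    simp only [Set.mem_iUnion, exists_prop]
    constructor
    · intro hx
      obtain ⟨y, g, hQ, hm⟩ := hcov x hx
      exact ⟨y, hQ.2.2.1, by rw [Q_gfun hQ]; exact hm⟩
    · rintro ⟨y, hy, hx⟩
      obtain ⟨g, hQ⟩ := hD y hy
      rw [Q_gfun hQ] at hx
      exact hQ.2.2.2.2.2.2.1 hx
  · intro y hy z hz hne
    obtain ⟨gy, hQy⟩ := hD y hy
    obtain ⟨gz, hQz⟩ := hD z hz
    rw [Q_gfun hQy, Q_gfun hQz, Set.disjoint_left]
    intro x hxy hxz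
    rcases hne.lt_or_gt with h | h
    · have hyz : y ∈ Dset a k ∩ Set.Icc gz z := ⟨hy, le_trans hxz.1 hxy.2, h.le⟩
      rw [hQz.2.2.2.2.1] at hyz
      exact hne hyz
    · have hzy : z ∈ Dset a k ∩ Set.Icc gy y := ⟨hz, le_trans hxy.1 hxz.2, h.le⟩
      rw [hQy.2.2.2.2.1] at hzy
      exact hne hzy.symm
  · ext g'
    simp only [Set.mem_image]
    constructor
    · rintro ⟨y, hy, rfl⟩
      obtain ⟨g, hQ⟩ := hD y hy
      rw [Q_gfun hQ]
      exact hQ.1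
    · intro hg'
      obtain ⟨y, g, hQ, hm⟩ := hcov g' (Gset_subset_Ak hg')
      have hgg : g' ∈ Gset a k ∩ Set.Icc g y := ⟨hg', hm⟩
      rw [hQ.2.2.2.1] at hgg
      exact ⟨y, hQ.2.2.1, (Q_gfun hQ).trans hgg.symm⟩
  · intro y hy
    obtain ⟨g, hQ⟩ := hD y hy
    rw [Q_gfun hQ]
    constructor
    · intro j hj x₁ hx₁ x₂ hx₂
      unfold deltaF
      rcases hQ.2.2.2.2.2.1 j hj with h | h
      · rw [if_pos (h x₁ hx₁), if_pos (h x₂ hx₂)]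
      · rw [if_neg (not_lt.2 (h x₁ hx₁)), if_neg (not_lt.2 (h x₂ hx₂))]
    · intro j hj1 hjk
      obtain ⟨hm, hc⟩ := iter_mono_cont ha hQ.2.2.2.2.2.1 j hjk
      exact ⟨hc, hm⟩

end
end

section
/- Let k ≥ 2 be an integer. (a) The set {a ∈ [1/2, 2/3] : κ_a ≥ k} is a finite union of pairwise disjoint closed intervals each having nonempty interior; on each such interval the maps a ↦ T_a^j(0) for 1 ≤ j ≤ k are continuous and strictly decreasing, and the maps a ↦ δ_j for 1 ≤ j ≤ k−1 are constant. (b) The set {a ∈ [1/2, 2/3] : κ_a = k} is a union of pairwise disjoint open intervals (a'', a') whose endpoints satisfy T_{a''}^k(0) = 1 and T_{a'}^k(0) = (2a'−1)/(1−a'). -/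
open MeasureTheory Filter Set ProbabilityTheory
open scoped ENNReal Classical Topology

noncomputable section

namespace PI

def g (a : ℝ) : ℝ := (2 * a - 1) / (1 - a)
def fo (j : ℕ) (a : ℝ) : ℝ := (Tmap a)^[j] 0
def Hole (a : ℝ) : Set ℝ := Set.Ioo (g a) 1

lemma fo_zero (a : ℝ) : fo 0 a = 0 := rfl
lemma fo_succ (j : ℕ) (a : ℝ) : fo (j+1) a = Tmap a (fo j a) :=
  Function.iterate_succ_apply' _ _ _
lemma fo_add (m p : ℕ) (a : ℝ) : fo (m + p) a = (Tmap a)^[m] (fo p a) :=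
  Function.iterate_add_apply _ _ _ _

lemma Tmap_lt {a x : ℝ} (h : x < 1) : Tmap a x = (x+1)/a := if_pos h
lemma Tmap_ge {a x : ℝ} (h : 1 ≤ x) : Tmap a x = (x-1)/a := if_neg (not_lt.2 h)

lemma mem_Hole {a y : ℝ} : y ∈ Hole a ↔ g a < y ∧ y < 1 := Iff.rfl

lemma a_pos {a : ℝ} (h : (1:ℝ)/2 ≤ a) : 0 < a := by linarith
lemma one_sub_pos {a : ℝ} (h : a ≤ 2/3) : 0 < 1 - a := by linarith

lemma g_nonneg {a : ℝ} (h1 : (1:ℝ)/2 ≤ a) (h2 : a ≤ 2/3) : 0 ≤ g a := by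
  have := one_sub_pos h2
  exact div_nonneg (by linarith) (by linarith)

lemma g_lt_one {a : ℝ} (h1 : (1:ℝ)/2 ≤ a) (h2 : a < 2/3) : g a < 1 := by
  have h3 : 0 < 1 - a := by linarith
  rw [g, div_lt_one h3]; linarith

lemma g_le_one {a : ℝ} (h1 : (1:ℝ)/2 ≤ a) (h2 : a ≤ 2/3) : g a ≤ 1 := by
  have h3 : 0 < 1 - a := by linarith
  rw [g, div_le_one h3]; linarith

lemma g_twothirds : g (2/3) = 1 := by norm_num [g]

lemma g_strictMono : StrictMonoOn g (Set.Icc (1/2 : ℝ) (2/3)) := by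
  intro a ha b hb hab
  have ha3 : 0 < 1 - a := one_sub_pos ha.2
  have hb3 : 0 < 1 - b := one_sub_pos hb.2
  rw [g, g, div_lt_div_iff₀ ha3 hb3]
  nlinarith

lemma g_mono {a b : ℝ} (ha : a ∈ Set.Icc (1/2:ℝ) (2/3)) (hb : b ∈ Set.Icc (1/2:ℝ) (2/3))
    (h : a ≤ b) : g a ≤ g b := by
  rcases eq_or_lt_of_le h with rfl | h
  · exact le_refl _
  · exact (g_strictMono ha hb h).le

lemma inv_one_sub_ge_two {a : ℝ} (h1 : (1:ℝ)/2 ≤ a) (h2 : a ≤ 2/3) : 2 ≤ 1/(1-a) := by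
  have h3 : 0 < 1 - a := one_sub_pos h2
  rw [le_div_iff₀ h3]; linarith

lemma Tmap_fix {a : ℝ} (h1 : (1:ℝ)/2 ≤ a) (h2 : a ≤ 2/3) : Tmap a (1/(1-a)) = 1/(1-a) := by
  have h3 : 0 < 1 - a := one_sub_pos h2
  have h0 : 0 < a := a_pos h1
  rw [Tmap_ge (by linarith [inv_one_sub_ge_two h1 h2])]
  field_simp
  ring

lemma Tmap_g {a : ℝ} (h1 : (1:ℝ)/2 ≤ a) (h2 : a < 2/3) : Tmap a (g a) = 1/(1-a) := by
  have h3 : 0 < 1 - a := by linarith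
  have h0 : 0 < a := a_pos h1
  rw [Tmap_lt (g_lt_one h1 h2), g]
  field_simp
  ring

lemma kappa_ge_iff (a : ℝ) (k : ℕ) :
    (k : ℕ∞) ≤ kappa a 0 ↔ ∀ i < k, fo i a ∉ Hole a := by
  rw [kappa]
  simp only [le_iInf_iff]
  constructor
  · intro h i hik hmem
    have := h i hmem
    exact absurd (Nat.cast_le.mp this) (not_le.2 hik)
  · intro h j hmem
    by_contra hc
    have hjk : j < k := by
      by_contra h2
      exact hc (Nat.cast_le.2 (not_lt.1 h2))
    exact h j hjk hmem

lemma kappa_eq_iff (a : ℝ) (k : ℕ) :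
    kappa a 0 = (k : ℕ∞) ↔ (∀ i < k, fo i a ∉ Hole a) ∧ fo k a ∈ Hole a := by
  constructor
  · intro h
    have h1 : (k : ℕ∞) ≤ kappa a 0 := h.ge
    refine ⟨(kappa_ge_iff a k).1 h1, ?_⟩
    by_contra hc
    have h2 : ((k+1 : ℕ) : ℕ∞) ≤ kappa a 0 := by
      rw [kappa_ge_iff]
      intro i hik
      rcases Nat.lt_succ_iff_lt_or_eq.1 hik with h3 | rfl
      · exact (kappa_ge_iff a k).1 h1 i h3
      · exact hc
    rw [h] at h2
    exact absurd (Nat.cast_le.mp h2) (by omega)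
  · rintro ⟨h1, h2⟩
    refine le_antisymm ?_ ((kappa_ge_iff a k).2 h1)
    exact iInf₂_le k h2

def Rend (v : ℝ) : Prop :=
  v = 2/3 ∨ (v < 2/3 ∧ ∃ p, 0 < p ∧ (∀ m, fo (m + p) v = fo m v) ∧ (∀ m, fo m v ∉ Hole v))

lemma Rend_notin {v : ℝ} (h : Rend v) (m : ℕ) : fo m v ∉ Hole v := by
  rcases h with rfl | ⟨_, p, _, _, havoid⟩
  · intro hm
    have h1 := hm.1
    rw [g_twothirds] at h1
    exact absurd hm.2 (not_lt.2 h1.le)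
  · exact havoid m

lemma periodic_mult {v : ℝ} {p : ℕ} (hper : ∀ m, fo (m + p) v = fo m v) :
    ∀ t n, fo (n + t * p) v = fo n v := by
  intro t
  induction t with
  | zero => simp
  | succ t ih =>
    intro n
    have : n + (t+1) * p = (n + t * p) + p := by ring
    rw [this, hper, ih]

lemma Rend_ne_g {v : ℝ} (h1 : (1:ℝ)/2 ≤ v) (h : Rend v) (m : ℕ)
    (hlt : fo m v < 1) : fo m v ≠ g v := by
  rcases h with rfl | ⟨hv2, p, hp, hper, _⟩
  · rw [g_twothirds]; exact ne_of_lt hlt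
  · intro heq
    have h3 : 0 < 1 - v := by linarith
    have hfix : ∀ t, fo (m + 1 + t) v = 1/(1-v) := by
      intro t
      induction t with
      | zero =>
        rw [Nat.add_zero, fo_succ, heq, Tmap_g h1 hv2]
      | succ t ih =>
        have : m + 1 + (t + 1) = (m + 1 + t) + 1 := by ring
        rw [this, fo_succ, ih, Tmap_fix h1 hv2.le]
    have hbig : m + 1 ≤ (m + 1) * p := Nat.le_mul_of_pos_right _ hp
    have h4 : fo ((m+1) * p) v = fo 0 v := by
      have := periodic_mult hper (m+1) 0
      simpa using this
    have h5 : fo ((m+1) * p) v = 1/(1-v) := by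
      have : (m+1) * p = m + 1 + ((m+1) * p - (m+1)) := by omega
      rw [this, hfix]
    rw [fo_zero] at h4
    rw [h4] at h5
    have : (2:ℝ) ≤ 1/(1-v) := inv_one_sub_ge_two h1 (by linarith)
    linarith [h5]

lemma Rend_lt_g {v : ℝ} (h1 : (1:ℝ)/2 ≤ v) (h2 : v ≤ 2/3) (h : Rend v) (m : ℕ)
    (hlt : fo m v < 1) : fo m v < g v := by
  have hni := Rend_notin h m
  rw [mem_Hole] at hni
  push_neg at hni
  exact lt_of_le_of_ne (by by_contra hc; push_neg at hc; linarith [hni hc]) (Rend_ne_g h1 h m hlt)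

structure Comp (k : ℕ) (u v : ℝ) : Prop where
  hu : (1:ℝ)/2 ≤ u
  huv : u < v
  hv : v ≤ 2/3
  horb : ∀ a ∈ Set.Icc u v, ∀ i < k, fo i a ∉ Hole a
  hbranch : ∀ i < k, (∀ a ∈ Set.Icc u v, fo i a < 1) ∨ (∀ a ∈ Set.Icc u v, 1 ≤ fo i a)
  hcont : ∀ j ≤ k, ContinuousOn (fun a => fo j a) (Set.Icc u v)
  hanti : ∀ j, 1 ≤ j → j ≤ k → StrictAntiOn (fun a => fo j a) (Set.Icc u v)
  hpos : ∀ j ≤ k, ∀ a ∈ Set.Icc u v, 0 ≤ fo j a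
  hleft : fo k u = 1/(1-u)
  hright : Rend v

lemma Comp.sub {k : ℕ} {u v : ℝ} (h : Comp k u v) :
    Set.Icc u v ⊆ Set.Icc (1/2 : ℝ) (2/3) := fun a ha =>
  ⟨le_trans h.hu ha.1, le_trans ha.2 h.hv⟩

lemma strictAntiOn_div {h : ℝ → ℝ} {s : Set ℝ}
    (hh : StrictAntiOn h s) (hnn : ∀ a ∈ s, 0 ≤ h a) (hp : ∀ a ∈ s, 0 < a) :
    StrictAntiOn (fun a => h a / a) s := by
  intro a ha b hb hab
  have h1 : 0 < a := hp a ha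
  have h2 : 0 < b := hp b hb
  have h3 : h b < h a := hh ha hb hab
  have h4 : 0 ≤ h b := hnn b hb
  simp only
  rw [div_lt_div_iff₀ h2 h1]
  nlinarith

lemma fo_eq_lower {u v : ℝ} {j : ℕ} (hsub : Set.Icc u v ⊆ Set.Icc (1/2:ℝ) (2/3))
    (hb : ∀ a ∈ Set.Icc u v, fo j a < 1) :
    ∀ a ∈ Set.Icc u v, fo (j+1) a = (fo j a + 1)/a := fun a ha => by
  rw [fo_succ, Tmap_lt (hb a ha)]

lemma fo_eq_upper {u v : ℝ} {j : ℕ} (hsub : Set.Icc u v ⊆ Set.Icc (1/2:ℝ) (2/3))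
    (hb : ∀ a ∈ Set.Icc u v, 1 ≤ fo j a) :
    ∀ a ∈ Set.Icc u v, fo (j+1) a = (fo j a - 1)/a := fun a ha => by
  rw [fo_succ, Tmap_ge (hb a ha)]

lemma cont_next {u v : ℝ} {j : ℕ} (hsub : Set.Icc u v ⊆ Set.Icc (1/2:ℝ) (2/3))
    (hb : (∀ a ∈ Set.Icc u v, fo j a < 1) ∨ (∀ a ∈ Set.Icc u v, 1 ≤ fo j a))
    (hc : ContinuousOn (fun a => fo j a) (Set.Icc u v)) :
    ContinuousOn (fun a => fo (j+1) a) (Set.Icc u v) := by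
  have hne : ∀ a ∈ Set.Icc u v, a ≠ 0 := fun a ha =>
    ne_of_gt (a_pos (hsub ha).1)
  rcases hb with hb | hb
  · exact ContinuousOn.congr (ContinuousOn.div (hc.add continuousOn_const)
      continuousOn_id hne) (fun a ha => fo_eq_lower hsub hb a ha)
  · exact ContinuousOn.congr (ContinuousOn.div (hc.sub continuousOn_const)
      continuousOn_id hne) (fun a ha => fo_eq_upper hsub hb a ha)

lemma anti_next {u v : ℝ} {j : ℕ} (hsub : Set.Icc u v ⊆ Set.Icc (1/2:ℝ) (2/3))
    (hb : (∀ a ∈ Set.Icc u v, fo j a < 1) ∨ (∀ a ∈ Set.Icc u v, 1 ≤ fo j a))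
    (hpos : ∀ a ∈ Set.Icc u v, 0 ≤ fo j a)
    (ha : StrictAntiOn (fun a => fo j a) (Set.Icc u v)) :
    StrictAntiOn (fun a => fo (j+1) a) (Set.Icc u v) := by
  have hp : ∀ a ∈ Set.Icc u v, (0:ℝ) < a := fun a ha => a_pos (hsub ha).1
  rcases hb with hb | hb
  · have key : StrictAntiOn (fun a => (fo j a + 1)/a) (Set.Icc u v) :=
      strictAntiOn_div (fun a h1 b h2 hab => by
          have := ha h1 h2 hab; simp only at this ⊢; linarith)
        (fun a h1 => by have := hpos a h1; linarith) hp
    intro a h1 b h2 hab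
    have := key h1 h2 hab
    simp only at this ⊢
    rwa [fo_eq_lower hsub hb a h1, fo_eq_lower hsub hb b h2]
  · have key : StrictAntiOn (fun a => (fo j a - 1)/a) (Set.Icc u v) :=
      strictAntiOn_div (fun a h1 b h2 hab => by
          have := ha h1 h2 hab; simp only at this ⊢; linarith)
        (fun a h1 => by have := hb a h1; linarith) hp
    intro a h1 b h2 hab
    have := key h1 h2 hab
    simp only at this ⊢
    rwa [fo_eq_upper hsub hb a h1, fo_eq_upper hsub hb b h2]

lemma pos_next {u v : ℝ} {j : ℕ} (hsub : Set.Icc u v ⊆ Set.Icc (1/2:ℝ) (2/3))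
    (hb : (∀ a ∈ Set.Icc u v, fo j a < 1) ∨ (∀ a ∈ Set.Icc u v, 1 ≤ fo j a))
    (hpos : ∀ a ∈ Set.Icc u v, 0 ≤ fo j a) :
    ∀ a ∈ Set.Icc u v, 0 ≤ fo (j+1) a := by
  intro a ha
  have hp : (0:ℝ) < a := a_pos (hsub ha).1
  rcases hb with hb | hb
  · rw [fo_eq_lower hsub hb a ha]
    have := hpos a ha
    positivity
  · rw [fo_eq_upper hsub hb a ha]
    have := hb a ha
    apply div_nonneg (by linarith) hp.le

lemma santi_le {f : ℝ → ℝ} {s : Set ℝ} (h : StrictAntiOn f s) {a b : ℝ}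
    (ha : a ∈ s) (hb : b ∈ s) (hab : a ≤ b) : f b ≤ f a := by
  rcases eq_or_lt_of_le hab with rfl | h'
  · exact le_refl _
  · exact (h ha hb h').le

lemma periodic_avoid {x : ℝ} {p : ℕ} (hp : 0 < p) (hper : ∀ m, fo (m + p) x = fo m x)
    (h : ∀ r < p, fo r x ∉ Hole x) : ∀ m, fo m x ∉ Hole x := by
  intro m
  induction m using Nat.strong_induction_on with
  | _ m ih =>
    by_cases hm : m < p
    · exact h m hm
    · have heq : m = (m - p) + p := by omega
      rw [heq, hper]
      exact ih (m - p) (by omega)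

lemma g_contOn {u v : ℝ} (hsub : Set.Icc u v ⊆ Set.Icc (1/2:ℝ) (2/3)) :
    ContinuousOn g (Set.Icc u v) := by
  apply ContinuousOn.div
  · exact (continuous_const.mul continuous_id').sub continuous_const |>.continuousOn
  · exact (continuous_const.sub continuous_id').continuousOn
  · intro a ha
    have := one_sub_pos (hsub ha).2
    exact ne_of_gt this

lemma comp_step {k : ℕ} {u v : ℝ} (hk : 1 ≤ k) (hC : Comp k u v) :
    (1 ≤ fo k v ∧ Comp (k+1) u v ∧ (∀ a ∈ Set.Icc u v, fo k a ∉ Hole a)) ∨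
    (∃ b c, u < b ∧ b < c ∧ c < v ∧ fo k b = 1 ∧ fo k c = g c ∧
      Comp (k+1) u b ∧ Comp (k+1) c v ∧
      (∀ a ∈ Set.Icc u v, (fo k a ∈ Hole a ↔ a ∈ Set.Ioo b c))) := by
  have hsub := hC.sub
  have hanti_k := hC.hanti k hk le_rfl
  have hcont_k := hC.hcont k le_rfl
  have hu_mem : u ∈ Set.Icc u v := ⟨le_refl _, hC.huv.le⟩
  have hv_mem : v ∈ Set.Icc u v := ⟨hC.huv.le, le_refl _⟩
  have hu2 : u ≤ 2/3 := le_trans hC.huv.le hC.hv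
  have hv12 : (1:ℝ)/2 ≤ v := le_trans hC.hu hC.huv.le
  have hfu2 : (2:ℝ) ≤ fo k u := by
    rw [hC.hleft]; exact inv_one_sub_ge_two hC.hu hu2
  by_cases hcase : 1 ≤ fo k v
  · -- no splitting
    have hge : ∀ a ∈ Set.Icc u v, 1 ≤ fo k a := fun a ha =>
      le_trans hcase (santi_le hanti_k ha hv_mem ha.2)
    have hnotin : ∀ a ∈ Set.Icc u v, fo k a ∉ Hole a := fun a ha hmem =>
      absurd hmem.2 (not_lt.2 (hge a ha))
    refine Or.inl ⟨hcase, ?_, hnotin⟩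
    refine ⟨hC.hu, hC.huv, hC.hv, ?_, ?_, ?_, ?_, ?_, ?_, hC.hright⟩
    · intro a ha i hi
      rcases Nat.lt_succ_iff_lt_or_eq.1 hi with h | rfl
      · exact hC.horb a ha i h
      · exact hnotin a ha
    · intro i hi
      rcases Nat.lt_succ_iff_lt_or_eq.1 hi with h | rfl
      · exact hC.hbranch i h
      · exact Or.inr hge
    · intro j hj
      rcases Nat.lt_succ_iff_lt_or_eq.1 (Nat.lt_succ_of_le hj) with h | rfl
      · exact hC.hcont j (by omega)
      · exact cont_next hsub (Or.inr hge) hcont_k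
    · intro j hj1 hj2
      rcases Nat.lt_succ_iff_lt_or_eq.1 (Nat.lt_succ_of_le hj2) with h | rfl
      · exact hC.hanti j hj1 (by omega)
      · exact anti_next hsub (Or.inr hge) (hC.hpos k le_rfl) hanti_k
    · intro j hj
      rcases Nat.lt_succ_iff_lt_or_eq.1 (Nat.lt_succ_of_le hj) with h | rfl
      · exact hC.hpos j (by omega)
      · exact pos_next hsub (Or.inr hge) (hC.hpos k le_rfl)
    · rw [fo_succ, hC.hleft, Tmap_fix hC.hu hu2]
  · -- splitting case
    push_neg at hcase
    have hvltg : fo k v < g v := Rend_lt_g hv12 hC.hv hC.hright k hcase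
    -- the function φ = fo k - g
    have hgcont : ContinuousOn g (Set.Icc u v) := g_contOn hsub
    have hphicont : ContinuousOn (fun a => fo k a - g a) (Set.Icc u v) :=
      hcont_k.sub hgcont
    have hphianti : StrictAntiOn (fun a => fo k a - g a) (Set.Icc u v) := by
      intro a ha b hb hab
      have h1 := hanti_k ha hb hab
      have h2 := g_strictMono (hsub ha) (hsub hb) hab
      simp only at h1 ⊢
      linarith
    -- find b with fo k b = 1
    obtain ⟨b, hbmem, hbeq⟩ : ∃ b ∈ Set.Icc u v, fo k b = 1 := by
      have := intermediate_value_Icc' hC.huv.le hcont_k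
      have h1 : (1:ℝ) ∈ Set.Icc (fo k v) (fo k u) := ⟨hcase.le, by linarith⟩
      obtain ⟨b, hb1, hb2⟩ := this h1
      exact ⟨b, hb1, hb2⟩
    -- find c with φ c = 0
    obtain ⟨c, hcmem, hceq'⟩ : ∃ c ∈ Set.Icc u v, fo k c - g c = 0 := by
      have := intermediate_value_Icc' hC.huv.le hphicont
      have hphiu : fo k u - g u = 2 := by
        rw [hC.hleft, g]
        have h3 : 0 < 1 - u := one_sub_pos hu2
        field_simp
        ring
      have h1 : (0:ℝ) ∈ Set.Icc (fo k v - g v) (fo k u - g u) := by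
        constructor
        · linarith
        · rw [hphiu]; norm_num
      obtain ⟨c, hc1, hc2⟩ := this h1
      exact ⟨c, hc1, hc2⟩
    have hceq : fo k c = g c := by linarith
    -- c < v
    have hcv : c < v := by
      by_contra h
      push_neg at h
      have : c = v := le_antisymm hcmem.2 h
      rw [this] at hceq
      linarith
    -- g c < 1
    have hc23 : c < 2/3 := lt_of_lt_of_le hcv hC.hv
    have hgc1 : g c < 1 := g_lt_one (hsub hcmem).1 hc23
    -- b < c
    have hbc : b < c := by
      by_contra h
      push_neg at h
      have := santi_le hanti_k hcmem hbmem h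
      rw [hbeq, hceq] at this
      linarith
    -- u < b
    have hub : u < b := by
      by_contra h
      push_neg at h
      have := santi_le hanti_k hbmem hu_mem h
      rw [hbeq] at this
      linarith
    have hb23 : b < 2/3 := lt_of_lt_of_le (lt_trans hbc hcv) hC.hv
    -- subinterval inclusions
    have hsub1 : Set.Icc u b ⊆ Set.Icc u v := Set.Icc_subset_Icc le_rfl hbmem.2
    have hsub2 : Set.Icc c v ⊆ Set.Icc u v := Set.Icc_subset_Icc hcmem.1 le_rfl
    have hsub1' : Set.Icc u b ⊆ Set.Icc (1/2:ℝ) (2/3) := fun a ha => hsub (hsub1 ha)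
    have hsub2' : Set.Icc c v ⊆ Set.Icc (1/2:ℝ) (2/3) := fun a ha => hsub (hsub2 ha)
    have hge_ub : ∀ a ∈ Set.Icc u b, 1 ≤ fo k a := fun a ha => by
      have h1 := santi_le hanti_k (hsub1 ha) hbmem ha.2
      rw [hbeq] at h1
      exact h1
    have hlt_cv : ∀ a ∈ Set.Icc c v, fo k a < 1 := fun a ha => by
      have h1 : fo k a ≤ fo k c := santi_le hanti_k hcmem (hsub2 ha) ha.1
      rw [hceq] at h1
      linarith
    have hleg_cv : ∀ a ∈ Set.Icc c v, fo k a ≤ g a := fun a ha => by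
      have h1 : fo k a ≤ fo k c := santi_le hanti_k hcmem (hsub2 ha) ha.1
      have h2 : g c ≤ g a := g_mono (hsub hcmem) (hsub (hsub2 ha)) ha.1
      rw [hceq] at h1
      linarith
    refine Or.inr ⟨b, c, hub, hbc, hcv, hbeq, hceq, ?_, ?_, ?_⟩
    · -- Comp (k+1) u b
      refine ⟨hC.hu, hub, hb23.le, ?_, ?_, ?_, ?_, ?_, ?_, ?_⟩
      · intro a ha i hi
        rcases Nat.lt_succ_iff_lt_or_eq.1 hi with h | rfl
        · exact hC.horb a (hsub1 ha) i h
        · exact fun hmem => absurd hmem.2 (not_lt.2 (hge_ub a ha))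
      · intro i hi
        rcases Nat.lt_succ_iff_lt_or_eq.1 hi with h | rfl
        · exact (hC.hbranch i h).imp (fun H a ha => H a (hsub1 ha))
            (fun H a ha => H a (hsub1 ha))
        · exact Or.inr hge_ub
      · intro j hj
        rcases Nat.lt_succ_iff_lt_or_eq.1 (Nat.lt_succ_of_le hj) with h | rfl
        · exact (hC.hcont j (by omega)).mono hsub1
        · exact cont_next hsub1' (Or.inr hge_ub) (hcont_k.mono hsub1)
      · intro j hj1 hj2
        rcases Nat.lt_succ_iff_lt_or_eq.1 (Nat.lt_succ_of_le hj2) with h | rfl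
        · exact (hC.hanti j hj1 (by omega)).mono hsub1
        · exact anti_next hsub1' (Or.inr hge_ub)
            (fun a ha => hC.hpos k le_rfl a (hsub1 ha)) (hanti_k.mono hsub1)
      · intro j hj
        rcases Nat.lt_succ_iff_lt_or_eq.1 (Nat.lt_succ_of_le hj) with h | rfl
        · exact fun a ha => hC.hpos j (by omega) a (hsub1 ha)
        · exact pos_next hsub1' (Or.inr hge_ub)
            (fun a ha => hC.hpos k le_rfl a (hsub1 ha))
      · rw [fo_succ, hC.hleft, Tmap_fix hC.hu hu2]
      · -- Rend b
        have hfk1b : fo (k+1) b = 0 := by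
          rw [fo_succ, hbeq, Tmap_ge le_rfl]
          simp
        have hper : ∀ m, fo (m + (k+1)) b = fo m b := fun m => by
          rw [fo_add, hfk1b]
          rfl
        refine Or.inr ⟨hb23, k+1, Nat.succ_pos _, hper, ?_⟩
        apply periodic_avoid (Nat.succ_pos _) hper
        intro r hr
        rcases Nat.lt_succ_iff_lt_or_eq.1 hr with h | rfl
        · exact hC.horb b hbmem r h
        · rw [hbeq]
          exact fun hmem => lt_irrefl _ hmem.2
    · -- Comp (k+1) c v
      refine ⟨(hsub hcmem).1, hcv, hC.hv, ?_, ?_, ?_, ?_, ?_, ?_, hC.hright⟩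
      · intro a ha i hi
        rcases Nat.lt_succ_iff_lt_or_eq.1 hi with h | rfl
        · exact hC.horb a (hsub2 ha) i h
        · exact fun hmem => absurd hmem.1 (not_lt.2 (hleg_cv a ha))
      · intro i hi
        rcases Nat.lt_succ_iff_lt_or_eq.1 hi with h | rfl
        · exact (hC.hbranch i h).imp (fun H a ha => H a (hsub2 ha))
            (fun H a ha => H a (hsub2 ha))
        · exact Or.inl hlt_cv
      · intro j hj
        rcases Nat.lt_succ_iff_lt_or_eq.1 (Nat.lt_succ_of_le hj) with h | rfl
        · exact (hC.hcont j (by omega)).mono hsub2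
        · exact cont_next hsub2' (Or.inl hlt_cv) (hcont_k.mono hsub2)
      · intro j hj1 hj2
        rcases Nat.lt_succ_iff_lt_or_eq.1 (Nat.lt_succ_of_le hj2) with h | rfl
        · exact (hC.hanti j hj1 (by omega)).mono hsub2
        · exact anti_next hsub2' (Or.inl hlt_cv)
            (fun a ha => hC.hpos k le_rfl a (hsub2 ha)) (hanti_k.mono hsub2)
      · intro j hj
        rcases Nat.lt_succ_iff_lt_or_eq.1 (Nat.lt_succ_of_le hj) with h | rfl
        · exact fun a ha => hC.hpos j (by omega) a (hsub2 ha)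
        · exact pos_next hsub2' (Or.inl hlt_cv)
            (fun a ha => hC.hpos k le_rfl a (hsub2 ha))
      · rw [fo_succ, hceq, Tmap_g (hsub hcmem).1 hc23]
    · -- the iff
      intro a ha
      constructor
      · rintro ⟨hg1, hl1⟩
        constructor
        · by_contra h
          push_neg at h
          have h1 := santi_le hanti_k ha hbmem h
          rw [hbeq] at h1
          linarith
        · by_contra h
          push_neg at h
          have h1 : fo k a ≤ fo k c := santi_le hanti_k hcmem ha h
          have h2 : g c ≤ g a := g_mono (hsub hcmem) (hsub ha) h
          rw [hceq] at h1
          linarith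
      · rintro ⟨h1, h2⟩
        constructor
        · have h3 := hphianti ha hcmem h2
          simp only at h3
          have h4 : fo k c - g c = 0 := by linarith [hceq]
          linarith
        · have h3 := hanti_k hbmem ha h1
          simp only at h3
          rw [hbeq] at h3
          exact h3

lemma fo_one (a : ℝ) : fo 1 a = 1/a := by
  have h : fo 1 a = Tmap a (fo 0 a) := fo_succ 0 a
  rw [h, fo_zero, Tmap_lt (by norm_num)]
  norm_num

lemma comp_base : Comp 1 (1/2) (2/3) := by
  refine ⟨le_refl _, by norm_num, le_refl _, ?_, ?_, ?_, ?_, ?_, ?_, Or.inl rfl⟩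
  · intro a ha i hi
    have hi0 : i = 0 := by omega
    subst hi0
    rw [fo_zero]
    intro hmem
    exact absurd hmem.1 (not_lt.2 (g_nonneg ha.1 ha.2))
  · intro i hi
    have hi0 : i = 0 := by omega
    subst hi0
    exact Or.inl fun a _ => by rw [fo_zero]; norm_num
  · intro j hj
    interval_cases j
    · exact continuousOn_const
    · exact ContinuousOn.congr
        (ContinuousOn.div continuousOn_const continuousOn_id
          (fun a ha => ne_of_gt (a_pos ha.1)))
        (fun a _ => fo_one a)
  · intro j hj1 hj2
    have hj : j = 1 := by omega
    subst hj
    intro a ha b hb hab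
    simp only
    rw [fo_one, fo_one]
    exact one_div_lt_one_div_of_lt (a_pos ha.1) hab
  · intro j hj a ha
    interval_cases j
    · rw [fo_zero]
    · rw [fo_one]
      have := a_pos ha.1
      positivity
  · rw [fo_one]
    norm_num

lemma phi_anti {k : ℕ} {u v : ℝ} (hsub : Set.Icc u v ⊆ Set.Icc (1/2:ℝ) (2/3))
    (h : StrictAntiOn (fun a => fo k a) (Set.Icc u v)) :
    StrictAntiOn (fun a => fo k a - g a) (Set.Icc u v) := by
  intro a ha b hb hab
  have h1 := h ha hb hab
  have h2 := g_strictMono (hsub ha) (hsub hb) hab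
  simp only at h1 ⊢
  linarith

def Pk (k : ℕ) (r : ℝ × ℝ) : Prop :=
  ∃ b c : ℝ, r.1 < b ∧ b < c ∧ c < r.2 ∧ fo k b = 1 ∧ fo k c = g c ∧
    Comp (k+1) r.1 b ∧ Comp (k+1) c r.2 ∧
    ∀ a ∈ Set.Icc r.1 r.2, (fo k a ∈ Hole a ↔ a ∈ Set.Ioo b c)

lemma comp_step_Pk {k : ℕ} {r : ℝ × ℝ} (hk : 1 ≤ k) (hC : Comp k r.1 r.2)
    (hP : ¬ Pk k r) :
    Comp (k+1) r.1 r.2 ∧ (∀ a ∈ Set.Icc r.1 r.2, fo k a ∉ Hole a) := by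
  rcases comp_step hk hC with ⟨_, h1, h2⟩ | ⟨b, c, h⟩
  · exact ⟨h1, h2⟩
  · exact absurd ⟨b, c, h⟩ hP

noncomputable def nextF (k : ℕ) (r : ℝ × ℝ) : Finset (ℝ × ℝ) :=
  if h : Pk k r then {(r.1, h.choose), (h.choose_spec.choose, r.2)} else {r}

def GoodF (k : ℕ) (F : Finset (ℝ × ℝ)) : Prop :=
  (∀ r ∈ F, Comp k r.1 r.2) ∧
  ({a | a ∈ Set.Icc (1/2:ℝ) (2/3) ∧ ∀ i < k, fo i a ∉ Hole a}
    = ⋃ r ∈ F, Set.Icc r.1 r.2) ∧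
  ((F : Set (ℝ × ℝ)).Pairwise fun r s => Disjoint (Set.Icc r.1 r.2) (Set.Icc s.1 s.2))

lemma nextF_comp {k : ℕ} {r : ℝ × ℝ} (hk : 1 ≤ k) (hC : Comp k r.1 r.2) :
    ∀ r' ∈ nextF k r, Comp (k+1) r'.1 r'.2 := by
  intro r' hr'
  rw [nextF] at hr'
  split_ifs at hr' with h
  · obtain ⟨h1, h2, h3, h4, h5, h6, h7, h8⟩ := h.choose_spec.choose_spec
    simp only [Finset.mem_insert, Finset.mem_singleton] at hr'
    rcases hr' with rfl | rfl
    · exact h6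
    · exact h7
  · simp only [Finset.mem_singleton] at hr'
    subst hr'
    exact (comp_step_Pk hk hC h).1

lemma nextF_sub {k : ℕ} {r : ℝ × ℝ} (hk : 1 ≤ k) (hC : Comp k r.1 r.2) :
    ∀ r' ∈ nextF k r, Set.Icc r'.1 r'.2 ⊆ Set.Icc r.1 r.2 := by
  intro r' hr'
  rw [nextF] at hr'
  split_ifs at hr' with h
  · obtain ⟨h1, h2, h3, h4, h5, h6, h7, h8⟩ := h.choose_spec.choose_spec
    simp only [Finset.mem_insert, Finset.mem_singleton] at hr'
    rcases hr' with rfl | rfl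
    · exact Set.Icc_subset_Icc le_rfl (by simp only; linarith)
    · exact Set.Icc_subset_Icc (by simp only; linarith) le_rfl
  · simp only [Finset.mem_singleton] at hr'
    subst hr'
    exact le_refl _

lemma goodF_step {k : ℕ} {F : Finset (ℝ × ℝ)} (hk : 1 ≤ k) (hG : GoodF k F) :
    GoodF (k+1) (F.biUnion (nextF k)) := by
  obtain ⟨hmem, hset, hdis⟩ := hG
  refine ⟨?_, ?_, ?_⟩
  · intro r' hr'
    rw [Finset.mem_biUnion] at hr'
    obtain ⟨r, hr, hr'2⟩ := hr'
    exact nextF_comp hk (hmem r hr) r' hr'2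
  · ext a
    simp only [Set.mem_setOf_eq, Set.mem_iUnion]
    constructor
    · rintro ⟨ha1, ha2⟩
      have haS : a ∈ {a | a ∈ Set.Icc (1/2:ℝ) (2/3) ∧ ∀ i < k, fo i a ∉ Hole a} :=
        ⟨ha1, fun i hi => ha2 i (by omega)⟩
      rw [hset] at haS
      simp only [Set.mem_iUnion] at haS
      obtain ⟨r, hr, har⟩ := haS
      have hnotin : fo k a ∉ Hole a := ha2 k (by omega)
      by_cases h : Pk k r
      · obtain ⟨h1, h2, h3, h4, h5, h6, h7, h8⟩ := h.choose_spec.choose_spec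
        set b := h.choose
        set c := h.choose_spec.choose
        have hnio : a ∉ Set.Ioo b c := fun hio => hnotin ((h8 a har).2 hio)
        rw [Set.mem_Ioo, not_and_or, not_lt, not_lt] at hnio
        rcases hnio with hab | hca
        · refine ⟨(r.1, b), ?_, ⟨har.1, hab⟩⟩
          rw [Finset.mem_biUnion]
          exact ⟨r, hr, by
            rw [nextF, dif_pos h]
            exact Finset.mem_insert_self _ _⟩
        · refine ⟨(c, r.2), ?_, ⟨hca, har.2⟩⟩
          rw [Finset.mem_biUnion]
          exact ⟨r, hr, by
            rw [nextF, dif_pos h]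
            exact Finset.mem_insert_of_mem (Finset.mem_singleton_self _)⟩
      · refine ⟨r, ?_, har⟩
        rw [Finset.mem_biUnion]
        exact ⟨r, hr, by rw [nextF, dif_neg h]; simp⟩
    · rintro ⟨r', hr', har'⟩
      rw [Finset.mem_biUnion] at hr'
      obtain ⟨r, hr, hr'2⟩ := hr'
      have hC' := nextF_comp hk (hmem r hr) r' hr'2
      exact ⟨hC'.sub har', fun i hi => hC'.horb a har' i hi⟩
  · intro r' hr' s' hs' hne
    simp only [Finset.coe_biUnion, Set.mem_iUnion, Finset.mem_coe,
      Finset.mem_biUnion] at hr' hs'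
    obtain ⟨r, hr, hr'2⟩ := hr'
    obtain ⟨s, hs, hs'2⟩ := hs'
    by_cases hrs : r = s
    · subst hrs
      rw [nextF] at hr'2 hs'2
      split_ifs at hr'2 hs'2 with h
      · obtain ⟨h1, h2, h3, h4, h5, h6, h7, h8⟩ := h.choose_spec.choose_spec
        set b := h.choose
        set c := h.choose_spec.choose
        simp only [Finset.mem_insert, Finset.mem_singleton] at hr'2 hs'2
        have hd : Disjoint (Set.Icc r.1 b) (Set.Icc c r.2) := by
          rw [Set.disjoint_left]
          rintro x ⟨_, hx2⟩ ⟨hx3, _⟩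
          linarith
        rcases hr'2 with rfl | rfl <;> rcases hs'2 with rfl | rfl
        · exact absurd rfl hne
        · exact hd
        · exact hd.symm
        · exact absurd rfl hne
      · simp only [Finset.mem_singleton] at hr'2 hs'2
        rw [hr'2, hs'2] at hne
        exact absurd rfl hne
    · exact Set.disjoint_of_subset (nextF_sub hk (hmem r hr) r' hr'2)
        (nextF_sub hk (hmem s hs) s' hs'2) (hdis hr hs hrs)

lemma goodF_base : GoodF 1 {((1:ℝ)/2, (2:ℝ)/3)} := by
  refine ⟨?_, ?_, ?_⟩
  · intro r hr
    simp only [Finset.mem_singleton] at hr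
    subst hr
    exact comp_base
  · ext a
    simp only [Set.mem_setOf_eq, Finset.mem_singleton, Set.mem_iUnion]
    constructor
    · rintro ⟨ha, _⟩
      exact ⟨((1:ℝ)/2, (2:ℝ)/3), rfl, ha⟩
    · rintro ⟨r, rfl, ha⟩
      refine ⟨ha, ?_⟩
      intro i hi
      have hi0 : i = 0 := by omega
      subst hi0
      rw [fo_zero]
      intro hmem
      exact absurd hmem.1 (not_lt.2 (g_nonneg ha.1 ha.2))
  · simp

lemma goodF_exists : ∀ n : ℕ, ∃ F : Finset (ℝ × ℝ), GoodF (n+1) F := by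
  intro n
  induction n with
  | zero => exact ⟨_, goodF_base⟩
  | succ n ih =>
    obtain ⟨F, hF⟩ := ih
    exact ⟨_, goodF_step (by omega) hF⟩

end PI

theorem parameter_intervals
    (k : ℕ) (hk : 2 ≤ k) :
    (∃ F : Finset (ℝ × ℝ),
      (∀ r ∈ F, r.1 < r.2) ∧
      ({a | a ∈ Set.Icc (1/2 : ℝ) (2/3) ∧ (k : ℕ∞) ≤ kappa a 0}
        = ⋃ r ∈ F, Set.Icc r.1 r.2) ∧
      ((F : Set (ℝ × ℝ)).Pairwise fun r s =>
        Disjoint (Set.Icc r.1 r.2) (Set.Icc s.1 s.2)) ∧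
      ∀ r ∈ F,
        (∀ j : ℕ, 1 ≤ j → j ≤ k →
          ContinuousOn (fun a => (Tmap a)^[j] 0) (Set.Icc r.1 r.2) ∧
          StrictAntiOn (fun a => (Tmap a)^[j] 0) (Set.Icc r.1 r.2)) ∧
        (∀ j : ℕ, 1 ≤ j → j ≤ k - 1 →
          ∀ a₁ ∈ Set.Icc r.1 r.2, ∀ a₂ ∈ Set.Icc r.1 r.2,
            deltaF a₁ 0 j = deltaF a₂ 0 j)) ∧
    (∃ E : Set (ℝ × ℝ),
      (∀ r ∈ E, r.1 < r.2 ∧ (Tmap r.1)^[k] 0 = 1 ∧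
        (Tmap r.2)^[k] 0 = (2 * r.2 - 1) / (1 - r.2)) ∧
      ({a | a ∈ Set.Icc (1/2 : ℝ) (2/3) ∧ kappa a 0 = (k : ℕ∞)}
        = ⋃ r ∈ E, Set.Ioo r.1 r.2) ∧
      (E.Pairwise fun r s => Disjoint (Set.Ioo r.1 r.2) (Set.Ioo s.1 s.2))) := by

  obtain ⟨F, hG⟩ := PI.goodF_exists (k-1)
  rw [show k - 1 + 1 = k from by omega] at hG
  obtain ⟨hmem, hset, hdis⟩ := hG
  have hk1 : 1 ≤ k := by omega
  constructor
  · refine ⟨F, fun r hr => (hmem r hr).huv, ?_, hdis, ?_⟩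
    · rw [← hset]
      ext a
      simp only [Set.mem_setOf_eq]
      exact and_congr_right fun _ => PI.kappa_ge_iff a k
    · intro r hr
      have hC := hmem r hr
      refine ⟨fun j hj1 hj2 => ⟨hC.hcont j hj2, hC.hanti j hj1 hj2⟩, ?_⟩
      intro j hj1 hj2 a₁ ha₁ a₂ ha₂
      have hjk : j < k := by omega
      rcases hC.hbranch j hjk with h | h
      · have e1 := h a₁ ha₁
        have e2 := h a₂ ha₂
        simp only [PI.fo] at e1 e2
        simp only [deltaF, if_pos e1, if_pos e2]
      · have e1 := not_lt.2 (h a₁ ha₁)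
        have e2 := not_lt.2 (h a₂ ha₂)
        simp only [PI.fo] at e1 e2
        simp only [deltaF, if_neg e1, if_neg e2]
  · refine ⟨{p : ℝ × ℝ | ∃ r ∈ F, r.1 < p.1 ∧ p.1 < p.2 ∧ p.2 < r.2 ∧
      PI.fo k p.1 = 1 ∧ PI.fo k p.2 = PI.g p.2 ∧
      ∀ a ∈ Set.Icc r.1 r.2, (PI.fo k a ∈ PI.Hole a ↔ a ∈ Set.Ioo p.1 p.2)},
      ?_, ?_, ?_⟩
    · rintro p ⟨r, hr, h1, h2, h3, h4, h5, h6⟩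
      exact ⟨h2, h4, h5⟩
    · ext a
      simp only [Set.mem_setOf_eq, Set.mem_iUnion]
      constructor
      · rintro ⟨ha1, ha2⟩
        rw [PI.kappa_eq_iff] at ha2
        obtain ⟨hlt, hin⟩ := ha2
        have haS : a ∈ {a | a ∈ Set.Icc (1/2:ℝ) (2/3) ∧
            ∀ i < k, PI.fo i a ∉ PI.Hole a} := ⟨ha1, hlt⟩
        rw [hset] at haS
        simp only [Set.mem_iUnion] at haS
        obtain ⟨r, hr, har⟩ := haS
        rcases PI.comp_step hk1 (hmem r hr) with ⟨_, _, hno⟩ |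
          ⟨b, c, h1, h2, h3, h4, h5, _, _, h8⟩
        · exact absurd hin (hno a har)
        · exact ⟨(b, c), ⟨r, hr, h1, h2, h3, h4, h5, h8⟩, (h8 a har).1 hin⟩
      · rintro ⟨p, ⟨r, hr, h1, h2, h3, h4, h5, h6⟩, hap⟩
        have hC := hmem r hr
        have har : a ∈ Set.Icc r.1 r.2 := ⟨(h1.trans hap.1).le, (hap.2.trans h3).le⟩
        refine ⟨hC.sub har, ?_⟩
        rw [PI.kappa_eq_iff]
        exact ⟨fun i hi => hC.horb a har i hi, (h6 a har).2 hap⟩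
    · rintro p ⟨r, hr, hp1, hp2, hp3, hp4, hp5, hp6⟩ q ⟨s, hs, hq1, hq2, hq3, hq4, hq5, hq6⟩ hne
      by_cases hrs : r = s
      · subst hrs
        exfalso
        apply hne
        have hC := hmem r hr
        have hanti_k := hC.hanti k hk1 le_rfl
        have hphianti := PI.phi_anti hC.sub hanti_k
        have hp1m : p.1 ∈ Set.Icc r.1 r.2 := ⟨hp1.le, (hp2.trans hp3).le⟩
        have hq1m : q.1 ∈ Set.Icc r.1 r.2 := ⟨hq1.le, (hq2.trans hq3).le⟩
        have hp2m : p.2 ∈ Set.Icc r.1 r.2 := ⟨(hp1.trans hp2).le, hp3.le⟩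
        have hq2m : q.2 ∈ Set.Icc r.1 r.2 := ⟨(hq1.trans hq2).le, hq3.le⟩
        have e1 : p.1 = q.1 := hanti_k.injOn hp1m hq1m (by
          show PI.fo k p.1 = PI.fo k q.1
          rw [hp4, hq4])
        have e2 : p.2 = q.2 := hphianti.injOn hp2m hq2m (by
          show PI.fo k p.2 - PI.g p.2 = PI.fo k q.2 - PI.g q.2
          simp only [hp5, hq5, sub_self])
        exact Prod.ext e1 e2
      · have hd := hdis hr hs hrs
        apply Set.disjoint_of_subset _ _ hd
        · exact fun x hx => ⟨(hp1.trans hx.1).le, (hx.2.trans hp3).le⟩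
        · exact fun x hx => ⟨(hq1.trans hx.1).le, (hx.2.trans hq3).le⟩


end
end

section
/- Let a ∈ (1/2, 2/3] and p ∈ (0,1), and let (u_k)_{0 ≤ k < κ_a+1} be a summable sequence of reals. Define f : [0, 1/(1−a)] → ℝ by f(x) = ∑_{k=0}^{κ_a} u_k·1{x ≥ T_a^k(0)}, and set c_k = q·δ_k + p·(1−δ_k). Then for every x ∈ [0, 1/(1−a)]: p·f(a x + 1) + q·1{x ≥ 1/a}·f(a x − 1) = (p·∑_{k=0}^{κ_a} δ_k u_k)·1{x ≥ 0} + ∑_{k=1}^{κ_a} c_{k−1} u_{k−1}·1{x ≥ T_a^k(0)}. -/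
open MeasureTheory Filter Set ProbabilityTheory
open scoped ENNReal Classical Topology

noncomputable section

/-- The orbit of `0` stays nonnegative. -/
lemma Tmap_iter_nonneg {a : ℝ} (ha0 : 0 < a) : ∀ k : ℕ, 0 ≤ (Tmap a)^[k] 0 := by
  intro k
  induction k with
  | zero => simp
  | succ k ih =>
    rw [Function.iterate_succ_apply', Tmap]
    split_ifs with h
    · exact div_nonneg (by linarith) ha0.le
    · exact div_nonneg (by linarith [not_lt.mp h]) ha0.le

lemma Tmap_iter_eq_aux : ∀ k : ℕ, 1 ≤ k →
    ∃ m : ℤ, Odd m ∧ (Tmap (2/3 : ℝ))^[k] 0 = 3 * m / 2 ^ k := by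
  intro k hk
  induction k with
  | zero => omega
  | succ k ih =>
    rcases Nat.eq_or_lt_of_le hk with h1 | h1
    · refine ⟨1, ⟨0, by ring⟩, ?_⟩
      have : k = 0 := by omega
      subst this
      norm_num [Tmap]
    · have hk1 : 1 ≤ k := by omega
      obtain ⟨m, hm, heq⟩ := ih hk1
      obtain ⟨j, hj⟩ : ∃ j, k = j + 1 := ⟨k - 1, by omega⟩
      have heven : Even ((2:ℤ)^k) := by
        rw [hj]; exact ⟨2^j, by ring⟩
      have h2k : (0:ℝ) < 2 ^ k := by positivity
      rw [Function.iterate_succ_apply', heq]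
      unfold Tmap
      split_ifs with h
      · refine ⟨3 * m + 2^k, ((by decide : Odd (3:ℤ)).mul hm).add_even heven, ?_⟩
        push_cast
        field_simp
        ring
      · refine ⟨3 * m - 2^k, ((by decide : Odd (3:ℤ)).mul hm).sub_even heven, ?_⟩
        push_cast
        field_simp
        ring

/-- For `a = 2/3` the orbit of `0` never hits `1`. -/
lemma Tmap_iter_ne_one : ∀ k : ℕ, (Tmap (2/3 : ℝ))^[k] 0 ≠ 1 := by
  intro k
  rcases Nat.eq_zero_or_pos k with h0 | h1
  · subst h0; norm_num
  · obtain ⟨m, hm, heq⟩ := Tmap_iter_eq_aux k h1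
    rw [heq]
    intro hcontra
    have h2k : (0:ℝ) < 2 ^ k := by positivity
    have : (3 * m : ℝ) = 2 ^ k := by
      field_simp at hcontra
      linarith
    have hint : 3 * m = 2 ^ k := by exact_mod_cast this
    obtain ⟨j, hj⟩ : ∃ j, k = j + 1 := ⟨k - 1, by omega⟩
    have heven : Even ((2:ℤ)^k) := by rw [hj]; exact ⟨2^j, by ring⟩
    have hodd : Odd ((2:ℤ)^k) := hint ▸ ((by decide : Odd (3:ℤ)).mul hm)
    exact (Int.not_odd_iff_even.mpr heven) hodd

/-- If `k ≤ κ` but not `k + 1 ≤ κ`, then the orbit is in the hole at time `k`. -/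
lemma kappa_attain {a x : ℝ} {k : ℕ} (h1 : (k : ℕ∞) ≤ kappa a x)
    (h2 : ¬ ((k : ℕ∞) + 1 ≤ kappa a x)) :
    (Tmap a)^[k] x ∈ Set.Ioo ((2 * a - 1) / (1 - a)) 1 := by
  push_neg at h2
  obtain ⟨j, hj⟩ := iInf_lt_iff.mp h2
  obtain ⟨hPj, hjk⟩ := iInf_lt_iff.mp hj
  have hκj : kappa a x ≤ (j : ℕ∞) := iInf₂_le j hPj
  have hkj : (k : ℕ∞) ≤ (j : ℕ∞) := h1.trans hκj
  have hjk' : (j : ℕ∞) < (k : ℕ∞) + 1 := hjk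
  have : j = k := by
    have h1' : k ≤ j := by exact_mod_cast hkj
    have h2' : (j : ℕ∞) < ((k + 1 : ℕ) : ℕ∞) := by push_cast; exact hjk'
    have h2'' : j < k + 1 := by exact_mod_cast h2'
    omega
  rwa [this] at hPj

theorem killed_operator_on_saltus_functions
    (a p : ℝ) (ha : a ∈ Set.Ioc (1/2 : ℝ) (2/3)) (hp : p ∈ Set.Ioo (0 : ℝ) 1)
    (u : ℕ → ℝ)
    (hu : Summable (fun k : ℕ => if (k : ℕ∞) ≤ kappa a 0 then u k else 0))
    (f : ℝ → ℝ)
    (hf : ∀ x : ℝ,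
      f x = ∑' k : ℕ, if (k : ℕ∞) ≤ kappa a 0 ∧ (Tmap a)^[k] 0 ≤ x then u k else 0)
    (x : ℝ) (hx : x ∈ Set.Icc (0 : ℝ) (1 / (1 - a))) :
    p * f (a * x + 1) + (1 - p) * (if 1 / a ≤ x then f (a * x - 1) else 0)
      = (p * ∑' k : ℕ, (if (k : ℕ∞) ≤ kappa a 0 then deltaF a 0 k * u k else 0))
          * (if (0 : ℝ) ≤ x then 1 else 0)
        + ∑' k : ℕ,
            if 1 ≤ k ∧ (k : ℕ∞) ≤ kappa a 0 ∧ (Tmap a)^[k] 0 ≤ x then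
              ((1 - p) * deltaF a 0 (k - 1) + p * (1 - deltaF a 0 (k - 1))) * u (k - 1)
            else 0 := by
  obtain ⟨ha1, ha2⟩ := ha
  obtain ⟨hp0, hp1⟩ := hp
  obtain ⟨hx0, hx1⟩ := hx
  have ha0 : (0:ℝ) < a := by linarith
  have ha1' : (0:ℝ) < 1 - a := by linarith
  set κ := kappa a 0 with hκdef
  set t : ℕ → ℝ := fun k => (Tmap a)^[k] 0 with htdef
  have htnn : ∀ k, 0 ≤ t k := Tmap_iter_nonneg ha0
  set c : ℝ := if 1 / a ≤ x then 1 - p else 0 with hcdef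
  -- term functions
  set g1 : ℕ → ℝ := fun k => if (k : ℕ∞) ≤ κ ∧ t k ≤ a * x + 1 then u k else 0 with hg1def
  set g2 : ℕ → ℝ := fun k => if (k : ℕ∞) ≤ κ ∧ t k ≤ a * x - 1 then u k else 0 with hg2def
  set h1 : ℕ → ℝ := fun k => if (k : ℕ∞) ≤ κ then deltaF a 0 k * u k else 0 with hh1def
  set h2f : ℕ → ℝ := fun k =>
    if 1 ≤ k ∧ (k : ℕ∞) ≤ κ ∧ t k ≤ x then
      ((1 - p) * deltaF a 0 (k - 1) + p * (1 - deltaF a 0 (k - 1))) * u (k - 1)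
    else 0 with hh2def
  -- the key per-term identity
  have key : ∀ k : ℕ, p * g1 k + c * g2 k = p * h1 k + h2f (k + 1) := by
    intro k
    have hcast : ((k + 1 : ℕ) : ℕ∞) = (k : ℕ∞) + 1 := by push_cast; ring
    have hsub : (k + 1) - 1 = k := by omega
    by_cases hA : (k : ℕ∞) ≤ κ
    · have hsucc : t (k+1) = Tmap a (t k) := Function.iterate_succ_apply' _ _ _
      by_cases hδ : t k < 1
      · have hδ1 : deltaF a 0 k = 1 := if_pos hδ
        have ht1 : t (k+1) = (t k + 1) / a := by rw [hsucc, Tmap, if_pos hδ]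
        have hiff : t k ≤ a * x - 1 ↔ t (k+1) ≤ x := by
          rw [ht1, div_le_iff₀ ha0]
          constructor <;> intro h <;> nlinarith [mul_comm x a]
        have hg1t : t k ≤ a * x + 1 := by nlinarith [mul_nonneg ha0.le hx0]
        by_cases hk1 : (k : ℕ∞) + 1 ≤ κ
        · by_cases hT : t (k+1) ≤ x
          · have hxa : 1 / a ≤ x := by
              refine le_trans ?_ hT
              rw [ht1]
              gcongr
              linarith [htnn k]
            have hcp : c = 1 - p := if_pos hxa
            simp only [hg1def, hg2def, hh1def, hh2def]
            rw [if_pos ⟨hA, hg1t⟩, if_pos ⟨hA, hiff.mpr hT⟩, if_pos hA,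
              if_pos ⟨by omega, by rw [hcast]; exact hk1, hT⟩, hsub, hδ1, hcp]
            ring
          · have hng2 : ¬ (t k ≤ a * x - 1) := fun h => hT (hiff.mp h)
            simp only [hg1def, hg2def, hh1def, hh2def]
            rw [if_pos ⟨hA, hg1t⟩, if_neg (fun h => hng2 h.2), if_pos hA,
              if_neg (fun h => hT h.2.2), hδ1]
            ring
        · obtain ⟨hlow, _⟩ := kappa_attain hA hk1
          have hxb : x * (1 - a) ≤ 1 := (le_div_iff₀ ha1').mp hx1
          have hlow' : (2 * a - 1) < t k * (1 - a) := (div_lt_iff₀ ha1').mp hlow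
          have hTgt : x < t (k+1) := by
            rw [ht1, lt_div_iff₀ ha0]
            nlinarith [mul_le_mul_of_nonneg_right hxb ha0.le]
          have hng2 : ¬ (t k ≤ a * x - 1) := fun h => (not_le.mpr hTgt) (hiff.mp h)
          simp only [hg1def, hg2def, hh1def, hh2def]
          rw [if_pos ⟨hA, hg1t⟩, if_neg (fun h => hng2 h.2), if_pos hA,
            if_neg (fun h => (not_le.mpr hTgt) h.2.2), hδ1]
          ring
      · have hδ0 : deltaF a 0 k = 0 := if_neg hδ
        have h1le : 1 ≤ t k := not_lt.mp hδ
        have ht1 : t (k+1) = (t k - 1) / a := by rw [hsucc, Tmap, if_neg hδ]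
        have hk1 : (k : ℕ∞) + 1 ≤ κ := by
          by_contra hk1
          obtain ⟨_, hup⟩ := kappa_attain hA hk1
          exact hδ hup
        have hiff : t k ≤ a * x + 1 ↔ t (k+1) ≤ x := by
          rw [ht1, div_le_iff₀ ha0]
          constructor <;> intro h <;> nlinarith [mul_comm x a]
        have hng2 : ¬ (t k ≤ a * x - 1) := by
          intro hle
          have hxb : x * (1 - a) ≤ 1 := (le_div_iff₀ ha1').mp hx1
          have hbound : a * x - 1 ≤ (2 * a - 1) / (1 - a) := by
            rw [le_div_iff₀ ha1']; nlinarith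
          rcases lt_or_eq_of_le ha2 with h23 | h23
          · have : (2 * a - 1) / (1 - a) < 1 := by
              rw [div_lt_iff₀ ha1']; linarith
            linarith
          · have hhk : (2 * a - 1) / (1 - a) = 1 := by rw [h23]; norm_num
            have hone : t k = 1 := le_antisymm (by linarith) h1le
            have hone' : (Tmap a)^[k] 0 = 1 := hone
            exact Tmap_iter_ne_one k (h23 ▸ hone')
        by_cases hT : t (k+1) ≤ x
        · simp only [hg1def, hg2def, hh1def, hh2def]
          rw [if_pos ⟨hA, hiff.mpr hT⟩, if_neg (fun h => hng2 h.2), if_pos hA,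
            if_pos ⟨by omega, by rw [hcast]; exact hk1, hT⟩, hsub, hδ0]
          ring
        · simp only [hg1def, hg2def, hh1def, hh2def]
          rw [if_neg (fun h => hT (hiff.mp h.2)), if_neg (fun h => hng2 h.2), if_pos hA,
            if_neg (fun h => hT h.2.2), hδ0]
          ring
    · have hA1 : ¬ (((k + 1 : ℕ) : ℕ∞) ≤ κ) := by
        rw [hcast]
        intro h
        exact hA (le_trans (by exact le_self_add) h)
      simp only [hg1def, hg2def, hh1def, hh2def]
      rw [if_neg (fun h => hA h.1), if_neg (fun h => hA h.1), if_neg hA,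
        if_neg (fun h => hA1 h.2.1)]
      ring
  -- summability
  have hbase : Summable (fun k : ℕ => if (k : ℕ∞) ≤ κ then u k else 0) := hu
  have Sg1 : Summable g1 := by
    refine (hbase.indicator {k : ℕ | t k ≤ a * x + 1}).congr fun k => ?_
    by_cases h1 : t k ≤ a * x + 1 <;> by_cases h2 : (k : ℕ∞) ≤ κ <;>
      simp [Set.indicator_apply, h1, h2, hg1def]
  have Sg2 : Summable g2 := by
    refine (hbase.indicator {k : ℕ | t k ≤ a * x - 1}).congr fun k => ?_
    by_cases h1 : t k ≤ a * x - 1 <;> by_cases h2 : (k : ℕ∞) ≤ κ <;>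
      simp [Set.indicator_apply, h1, h2, hg2def]
  have Sh1 : Summable h1 := by
    refine (hbase.indicator {k : ℕ | t k < 1}).congr fun k => ?_
    by_cases h1 : t k < 1 <;> by_cases h2 : (k : ℕ∞) ≤ κ <;>
      simp [Set.indicator_apply, h1, h2, hh1def, deltaF, htdef]
  have Sshift : Summable (fun k : ℕ => h2f (k + 1)) := by
    have hweq : (fun k : ℕ => h2f (k + 1)) = fun k => p * g1 k + c * g2 k - p * h1 k :=
      funext fun k => by linarith [key k]
    rw [hweq]
    exact ((Sg1.mul_left p).add (Sg2.mul_left c)).sub (Sh1.mul_left p)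
  have Sh2 : Summable h2f := (summable_nat_add_iff 1).mp Sshift
  -- assembling
  rw [hf (a * x + 1), hf (a * x - 1), if_pos hx0, mul_one]
  have e1 : p * ∑' k, g1 k = ∑' k, p * g1 k := tsum_mul_left.symm
  have e2 : (1 - p) * (if 1 / a ≤ x then ∑' k, g2 k else 0) = ∑' k, c * g2 k := by
    rw [tsum_mul_left]
    by_cases hax : 1 / a ≤ x
    · rw [if_pos hax, hcdef, if_pos hax]
    · rw [if_neg hax, hcdef, if_neg hax, zero_mul, mul_zero]
  calc p * ∑' k, g1 k + (1 - p) * (if 1 / a ≤ x then ∑' k, g2 k else 0)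
      = ∑' k, p * g1 k + ∑' k, c * g2 k := by rw [e1, e2]
    _ = ∑' k, (p * g1 k + c * g2 k) := (Summable.tsum_add (Sg1.mul_left p) (Sg2.mul_left c)).symm
    _ = ∑' k, (p * h1 k + h2f (k + 1)) := tsum_congr key
    _ = ∑' k, p * h1 k + ∑' k, h2f (k + 1) := Summable.tsum_add (Sh1.mul_left p) Sshift
    _ = p * ∑' k, h1 k + ∑' k, h2f k := by
        rw [tsum_mul_left]
        congr 1
        rw [Summable.tsum_eq_zero_add Sh2]
        have : h2f 0 = 0 := by simp [hh2def]
        rw [this, zero_add]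

end
end
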